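/- arXiv:2603.08110 — 8 statements merged into one kernel-verified Lean document; each statement's English description precedes it below -/
import Mathlib

section
/- For every n ≥ 1 and every k, ℓ ∈ {1,…,n−1}, the sorting match puzzle of order n whose first k rows are labeled ascending and remaining rows descending, and whose first ℓ columns are labeled ascending and remaining columns descending, is solvable: there exists a bijection g from Fin n × Fin n to Fin (n²) such that every row labeled A is strictly increasing left-to-right, every row labeled D is strictly decreasing, every column labeled A is strictly increasing top-to-bottom (in the appropriate convention), and every column labeled D is strictly decreasing. -/
/-- A solution of the sorting match puzzle `(r, c)` of order `n`:
a bijective filling of the grid respecting all row and column labels. -/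
def IsSolution (n : ℕ) (r c : Fin n → Bool) (g : Fin n × Fin n → Fin (n ^ 2)) : Prop :=
  Function.Bijective g ∧
  (∀ i : Fin n, if r i = true then StrictMono (fun j => g (i, j))
                else StrictAnti (fun j => g (i, j))) ∧
  (∀ j : Fin n, if c j = true then StrictMono (fun i => g (i, j))
                else StrictAnti (fun i => g (i, j)))

/-- Solvability of the sorting match puzzle `(r, c)`. -/
def Solvable (n : ℕ) (r c : Fin n → Bool) : Prop :=
  ∃ g : Fin n × Fin n → Fin (n ^ 2), IsSolution n r c g

/-- Puzzles with rows `A^k D^{n-k}` and columns `A^ℓ D^{n-ℓ}`,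
`1 ≤ k, ℓ ≤ n-1`, are solvable. -/
theorem solvable_AkD_AlD (n k ℓ : ℕ) (hn : 1 ≤ n)
    (hk1 : 1 ≤ k) (hk2 : k ≤ n - 1) (hl1 : 1 ≤ ℓ) (hl2 : ℓ ≤ n - 1) :
    Solvable n (fun i => decide (i.val < k)) (fun j => decide (j.val < ℓ)) := by
  classical
  -- the potential function
  set φ : Fin n × Fin n → ℤ :=
    fun p => (2 * ((k : ℤ) - p.1) - 1) * (2 * ((p.2 : ℤ) - ℓ) + 1) with hφdef
  -- tie-breaking index
  set t : Fin n × Fin n → ℤ :=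
    fun p => ((finProdFinEquiv p : Fin (n * n)) : ℤ) with htdef
  have ht0 : ∀ p, 0 ≤ t p := fun p => Int.ofNat_nonneg _
  have ht1 : ∀ p, t p < (n : ℤ) ^ 2 := by
    intro p
    have := (finProdFinEquiv p : Fin (n * n)).isLt
    have : ((finProdFinEquiv p : Fin (n * n)) : ℤ) < (n : ℤ) * n := by
      exact_mod_cast this
    simpa [htdef, sq] using this
  have htinj : Function.Injective t := by
    intro p q h
    have : ((finProdFinEquiv p : Fin (n * n)) : ℤ) = ((finProdFinEquiv q : Fin (n * n)) : ℤ) := h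
    have : (finProdFinEquiv p : Fin (n * n)) = finProdFinEquiv q := by
      exact Fin.ext (by exact_mod_cast this)
    exact finProdFinEquiv.injective this
  -- the key
  set K : Fin n × Fin n → ℤ := fun p => φ p * (n : ℤ) ^ 2 + t p with hKdef
  have hK : ∀ p q, φ p < φ q → K p < K q := by
    intro p q h
    have h1 : φ p + 1 ≤ φ q := h
    have := ht0 q
    have := ht1 p
    simp only [hKdef]
    nlinarith [sq_nonneg ((n : ℤ))]
  have hKinj : Function.Injective K := by
    intro p q h
    have hφeq : φ p = φ q := by
      rcases lt_trichotomy (φ p) (φ q) with h' | h' | h'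
      · exact absurd h (ne_of_lt (hK _ _ h'))
      · exact h'
      · exact absurd h.symm (ne_of_lt (hK _ _ h'))
    have : t p = t q := by
      simp only [hKdef] at h; linarith [h, hφeq.symm ▸ h]
    exact htinj this
  -- the rank function
  set rk : Fin n × Fin n → ℕ :=
    fun p => (Finset.univ.filter fun q => K q < K p).card with hrkdef
  have hrklt : ∀ p, rk p < n ^ 2 := by
    intro p
    have hss : (Finset.univ.filter fun q => K q < K p) ⊂ Finset.univ := by
      refine ⟨Finset.filter_subset _ _, fun hsub => ?_⟩
      have := Finset.mem_filter.mp (hsub (Finset.mem_univ p))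
      exact lt_irrefl _ this.2
    have := Finset.card_lt_card hss
    simpa [Finset.card_univ, sq] using this
  have hmono : ∀ p q, K p < K q → rk p < rk q := by
    intro p q h
    apply Finset.card_lt_card
    refine ⟨fun r hr => ?_, fun hsub => ?_⟩
    · simp only [Finset.mem_filter, Finset.mem_univ, true_and] at hr ⊢
      exact lt_trans hr h
    · have := Finset.mem_filter.mp (hsub (Finset.mem_filter.mpr ⟨Finset.mem_univ p, h⟩))
      exact lt_irrefl _ this.2
  set g : Fin n × Fin n → Fin (n ^ 2) := fun p => ⟨rk p, hrklt p⟩ with hgdef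
  have hginj : Function.Injective g := by
    intro p q h
    by_contra hne
    have hKne : K p ≠ K q := fun h' => hne (hKinj h')
    rcases lt_or_gt_of_ne hKne with h' | h'
    · exact absurd (Fin.mk_eq_mk.mp h) (ne_of_lt (hmono _ _ h'))
    · exact absurd (Fin.mk_eq_mk.mp h).symm (ne_of_lt (hmono _ _ h'))
  have hgmono : ∀ p q, K p < K q → g p < g q := by
    intro p q h
    exact Fin.mk_lt_mk.mpr (hmono p q h)
  refine ⟨g, ?_, ?_, ?_⟩
  · exact (Fintype.bijective_iff_injective_and_card g).mpr
      ⟨hginj, by simp [sq]⟩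
  · intro i
    simp only [decide_eq_true_eq]
    split_ifs with hi
    · -- ascending row: i < k
      intro j j' hjj'
      apply hgmono
      apply hK
      simp only [hφdef]
      have ha : (1 : ℤ) ≤ 2 * ((k : ℤ) - i) - 1 := by
        have : (i : ℤ) + 1 ≤ k := by exact_mod_cast hi
        linarith
      have hb : (j : ℤ) + 1 ≤ (j' : ℤ) := by exact_mod_cast hjj'
      nlinarith
    · -- descending row: i ≥ k
      intro j j' hjj'
      apply hgmono
      apply hK
      simp only [hφdef]
      have ha : 2 * ((k : ℤ) - i) - 1 ≤ -1 := by
        have : (k : ℤ) ≤ i := by exact_mod_cast Nat.le_of_not_lt hi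
        linarith
      have hb : (j : ℤ) + 1 ≤ (j' : ℤ) := by exact_mod_cast hjj'
      nlinarith
  · intro j
    simp only [decide_eq_true_eq]
    split_ifs with hj
    · -- ascending column: j < ℓ
      intro i i' hii'
      apply hgmono
      apply hK
      simp only [hφdef]
      have hb : 2 * ((j : ℤ) - ℓ) + 1 ≤ -1 := by
        have : (j : ℤ) + 1 ≤ ℓ := by exact_mod_cast hj
        linarith
      have ha : (i : ℤ) + 1 ≤ (i' : ℤ) := by exact_mod_cast hii'
      nlinarith
    · -- descending column: j ≥ ℓ
      intro i i' hii'
      apply hgmono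
      apply hK
      simp only [hφdef]
      have hb : (1 : ℤ) ≤ 2 * ((j : ℤ) - ℓ) + 1 := by
        have : (ℓ : ℤ) ≤ j := by exact_mod_cast Nat.le_of_not_lt hj
        linarith
      have ha : (i : ℤ) + 1 ≤ (i' : ℤ) := by exact_mod_cast hii'
      nlinarith
end

section
/- For every n ≥ 1, any sorting match puzzle (r, c) of order n in which all columns carry the same label (column-uniform) is solvable, regardless of the row labels. -/
private lemma key_lt (n a b x y : ℕ) (hx : x < n) (hab : a < b) :
    a * n + x < b * n + y := by
  calc a * n + x < a * n + n := by omega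
    _ = (a + 1) * n := by ring
    _ ≤ b * n := Nat.mul_le_mul_right n hab
    _ ≤ b * n + y := Nat.le_add_right _ _

/-- Any column-uniform sorting match puzzle is solvable, regardless of row labels. -/
theorem solvable_of_column_uniform (n : ℕ) (hn : 1 ≤ n) (r c : Fin n → Bool)
    (huniform : ∀ j j' : Fin n, c j = c j') :
    Solvable n r c := by
  set b : Bool := c ⟨0, hn⟩ with hb
  set E : Fin n → Fin n := fun i => if b = true then i else i.rev with hE
  set F : Fin n → Fin n → Fin n := fun i j => if r i = true then j else j.rev with hF
  have hbound : ∀ i j : Fin n, (E i).val * n + (F i j).val < n ^ 2 := by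
    intro i j
    have h1 : (E i).val < n := (E i).isLt
    have h2 : (F i j).val < n := (F i j).isLt
    calc (E i).val * n + (F i j).val < (E i).val * n + n := by omega
      _ = ((E i).val + 1) * n := by ring
      _ ≤ n * n := Nat.mul_le_mul_right n h1
      _ = n ^ 2 := (sq n).symm
  refine ⟨fun p => ⟨(E p.1).val * n + (F p.1 p.2).val, hbound p.1 p.2⟩, ?_, ?_, ?_⟩
  · rw [Fintype.bijective_iff_injective_and_card]
    constructor
    · rintro ⟨i, j⟩ ⟨i', j'⟩ h
      simp only [Fin.mk.injEq] at h
      have hFj : (F i j).val < n := (F i j).isLt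
      have hFj' : (F i' j').val < n := (F i' j').isLt
      have hEe : (E i).val = (E i').val := by
        have h1 := congrArg (· / n) h
        rw [add_comm ((E i).val * n), add_comm ((E i').val * n),
          Nat.add_mul_div_right _ _ (by omega : 0 < n),
          Nat.add_mul_div_right _ _ (by omega : 0 < n),
          Nat.div_eq_of_lt hFj, Nat.div_eq_of_lt hFj'] at h1
        omega
      have hFe : (F i j).val = (F i' j').val := by rw [hEe] at h; omega
      have hii : i = i' := by
        have hE2 : E i = E i' := Fin.ext hEe
        by_cases hbt : b = true <;> simp [hE, hbt] at hE2 <;> exact hE2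
      subst hii
      have hF2 : F i j = F i j' := Fin.ext hFe
      have hjj : j = j' := by
        by_cases hrt : r i = true <;> simp [hF, hrt] at hF2 <;> exact hF2
      exact Prod.ext rfl hjj
    · simp [sq]
  · intro i
    by_cases hrt : r i = true
    · rw [if_pos hrt]
      intro j j' hjj
      simp only [Fin.mk_lt_mk, hF, hrt, if_pos]
      exact Nat.add_lt_add_left hjj _
    · rw [if_neg hrt]
      intro j j' hjj
      simp only [Fin.mk_lt_mk, hF, hrt, if_neg, Bool.false_eq_true, ite_false]
      exact Nat.add_lt_add_left (Fin.rev_lt_rev.mpr hjj) _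
  · intro j
    have hcb : c j = b := huniform j ⟨0, hn⟩
    by_cases hbt : b = true
    · rw [if_pos (hcb.trans hbt)]
      intro i i' hii
      simp only [Fin.mk_lt_mk, hE, hbt, if_pos]
      exact key_lt n _ _ _ _ (F i j).isLt hii
    · rw [if_neg (by simp [hcb, hbt])]
      intro i i' hii
      simp only [Fin.mk_lt_mk, hE, hbt, Bool.false_eq_true, ite_false]
      exact key_lt n _ _ _ _ (F i' j).isLt (Fin.rev_lt_rev.mpr hii)
end

section
/- A sorting match puzzle (r, c) of order n ≥ 2 is solvable if and only if it is row-uniform, or column-uniform, or there exist k, ℓ ∈ {1,…,n−1} such that (r, c) = (A^k D^{n−k}, A^ℓ D^{n−ℓ}), or there exist k, ℓ ∈ {1,…,n−1} such that (r, c) = (D^k A^{n−k}, D^ℓ A^{n−ℓ}). -/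
open Function Finset

private lemma mul_add_inj {a b c d m : ℕ} (hb : b < m) (hd : d < m)
    (h : a * m + b = c * m + d) : a = c ∧ b = d := by
  rcases Nat.lt_trichotomy a c with h' | h' | h'
  · have h1 : (a + 1) * m ≤ c * m := Nat.mul_le_mul (by omega) le_rfl
    rw [add_one_mul] at h1; omega
  · subst h'; omega
  · have h1 : (c + 1) * m ≤ a * m := Nat.mul_le_mul (by omega) le_rfl
    rw [add_one_mul] at h1; omega

private lemma blk_lt {x y X Y : ℕ} (hx : x < X) (hy : y < Y) : x * Y + y < X * Y := by
  have h1 : (x + 1) * Y ≤ X * Y := Nat.mul_le_mul (by omega) le_rfl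
  rw [add_one_mul] at h1; omega

section Rank
variable {n : ℕ}

private def rnk (key : Fin n × Fin n → ℕ) (p : Fin n × Fin n) : ℕ :=
  (univ.filter (fun x => key x < key p)).card

private lemma rnk_lt {key : Fin n × Fin n → ℕ} {p q : Fin n × Fin n}
    (h : key p < key q) : rnk key p < rnk key q := by
  apply Finset.card_lt_card
  constructor
  · intro x hx
    simp only [Finset.mem_filter, Finset.mem_univ, true_and] at hx ⊢
    omega
  · intro hsub
    have hp : p ∈ univ.filter (fun x => key x < key q) := by simp [h]
    have := hsub hp
    simp at this

private lemma rnk_lt_card (key : Fin n × Fin n → ℕ) (p : Fin n × Fin n) :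
    rnk key p < n ^ 2 := by
  have h1 : (univ.filter (fun x => key x < key p)) ⊂ univ := by
    rw [Finset.ssubset_univ_iff]
    intro heq
    have : p ∈ univ.filter (fun x => key x < key p) := by rw [heq]; exact Finset.mem_univ p
    simp at this
  calc rnk key p < (univ : Finset (Fin n × Fin n)).card := Finset.card_lt_card h1
    _ = n ^ 2 := by simp [Finset.card_univ, pow_two]

private lemma solvable_of_key (r c : Fin n → Bool) (key : Fin n × Fin n → ℕ)
    (hinj : ∀ p q, key p = key q → p = q)
    (hrA : ∀ (i j j' : Fin n), r i = true → j < j' → key (i, j) < key (i, j'))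
    (hrD : ∀ (i j j' : Fin n), r i = false → j < j' → key (i, j') < key (i, j))
    (hcA : ∀ (j i i' : Fin n), c j = true → i < i' → key (i, j) < key (i', j))
    (hcD : ∀ (j i i' : Fin n), c j = false → i < i' → key (i', j) < key (i, j)) :
    Solvable n r c := by
  refine ⟨fun p => ⟨rnk key p, rnk_lt_card key p⟩, ?_, ?_, ?_⟩
  · rw [Fintype.bijective_iff_injective_and_card]
    constructor
    · intro p q h
      have h' : rnk key p = rnk key q := congrArg Fin.val h
      by_contra hne
      have hk : key p ≠ key q := fun he => hne (hinj p q he)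
      rcases hk.lt_or_gt with hl | hl
      · exact absurd h' (Nat.ne_of_lt (rnk_lt hl))
      · exact absurd h'.symm (Nat.ne_of_lt (rnk_lt hl))
    · simp [pow_two]
  · intro i
    cases hri : r i with
    | false =>
      simp only [Bool.false_eq_true, if_false]
      intro a b hab
      exact Fin.mk_lt_mk.mpr (rnk_lt (hrD i a b hri hab))
    | true =>
      simp only [if_true]
      intro a b hab
      exact Fin.mk_lt_mk.mpr (rnk_lt (hrA i a b hri hab))
  · intro j
    cases hcj : c j with
    | false =>
      simp only [Bool.false_eq_true, if_false]
      intro a b hab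
      exact Fin.mk_lt_mk.mpr (rnk_lt (hcD j a b hcj hab))
    | true =>
      simp only [if_true]
      intro a b hab
      exact Fin.mk_lt_mk.mpr (rnk_lt (hcA j a b hcj hab))
end Rank

section Constructions
variable {n : ℕ}

private lemma solvable_allA (c : Fin n → Bool) (hn : 0 < n) :
    Solvable n (fun _ => true) c := by
  apply solvable_of_key _ c
    (fun p => (p.2 : ℕ) * n + (if c p.2 = true then (p.1 : ℕ) else n - 1 - (p.1 : ℕ)))
  · rintro ⟨i, j⟩ ⟨i', j'⟩ h
    dsimp only at h
    have hi := i.isLt; have hi' := i'.isLt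
    have hX : (if c j = true then (i : ℕ) else n - 1 - (i : ℕ)) < n := by split <;> omega
    have hY : (if c j' = true then (i' : ℕ) else n - 1 - (i' : ℕ)) < n := by split <;> omega
    obtain ⟨e1, e2⟩ := mul_add_inj hX hY h
    have hjj : j = j' := Fin.ext e1
    subst hjj
    have : i = i' := by
      by_cases hcj : c j = true
      · rw [if_pos hcj, if_pos hcj] at e2; exact Fin.ext e2
      · rw [if_neg hcj, if_neg hcj] at e2; exact Fin.ext (by omega)
    rw [this]
  · intro i j j' _ hlt
    dsimp only
    have hi := i.isLt
    have hlt' : (j : ℕ) < (j' : ℕ) := hlt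
    have hX : (if c j = true then (i : ℕ) else n - 1 - (i : ℕ)) < n := by split <;> omega
    have h1 : ((j : ℕ) + 1) * n ≤ (j' : ℕ) * n := Nat.mul_le_mul (by omega) le_rfl
    rw [add_one_mul] at h1
    omega
  · intro i j j' hfalse _
    simp at hfalse
  · intro j i i' hcj hlt
    dsimp only
    have hlt' : (i : ℕ) < (i' : ℕ) := hlt
    simp only [hcj, if_true]
    omega
  · intro j i i' hcj hlt
    dsimp only
    have hlt' : (i : ℕ) < (i' : ℕ) := hlt
    have hi' := i'.isLt
    simp only [hcj, Bool.false_eq_true, if_false]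
    omega

private lemma solvable_stair (r c : Fin n → Bool) (k ℓ : ℕ)
    (hk1 : 1 ≤ k) (hk2 : k ≤ n - 1) (hl1 : 1 ≤ ℓ) (hl2 : ℓ ≤ n - 1)
    (hr : ∀ i, r i = decide ((i : ℕ) < k)) (hc : ∀ j, c j = decide ((j : ℕ) < ℓ)) :
    Solvable n r c := by
  have hkn : k < n := by omega
  have hln : ℓ < n := by omega
  apply solvable_of_key r c (fun p =>
    if (p.1 : ℕ) < k then
      if (p.2 : ℕ) < ℓ then (n-k)*(n-ℓ) + ((p.1 : ℕ)*ℓ + (p.2 : ℕ))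
      else (n-k)*(n-ℓ) + k*ℓ + ((k-1-(p.1 : ℕ))*(n-ℓ) + ((p.2 : ℕ)-ℓ))
    else
      if (p.2 : ℕ) < ℓ then (n-k)*(n-ℓ) + k*ℓ + k*(n-ℓ) + (((p.1 : ℕ)-k)*ℓ + (ℓ-1-(p.2 : ℕ)))
      else (n-1-(p.1 : ℕ))*(n-ℓ) + (n-1-(p.2 : ℕ)))
  · rintro ⟨i, j⟩ ⟨i', j'⟩ h
    have hi := i.isLt; have hj := j.isLt; have hi' := i'.isLt; have hj' := j'.isLt
    dsimp only at h
    split_ifs at h <;>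
    first
    | -- block 1 = block 1
      (have hh : (i : ℕ) * ℓ + (j : ℕ) = (i' : ℕ) * ℓ + (j' : ℕ) := by omega
       obtain ⟨e1, e2⟩ := mul_add_inj (show (j : ℕ) < ℓ by omega) (show (j' : ℕ) < ℓ by omega) hh
       simp only [Prod.mk.injEq, Fin.ext_iff]; omega)
    | -- block 2 = block 2
      (have hh : (k-1-(i : ℕ)) * (n-ℓ) + ((j : ℕ)-ℓ) = (k-1-(i' : ℕ)) * (n-ℓ) + ((j' : ℕ)-ℓ) := by
         omega
       obtain ⟨e1, e2⟩ := mul_add_inj (show (j : ℕ)-ℓ < n-ℓ by omega)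
         (show (j' : ℕ)-ℓ < n-ℓ by omega) hh
       simp only [Prod.mk.injEq, Fin.ext_iff]; omega)
    | -- block 3 = block 3
      (have hh : ((i : ℕ)-k) * ℓ + (ℓ-1-(j : ℕ)) = ((i' : ℕ)-k) * ℓ + (ℓ-1-(j' : ℕ)) := by omega
       obtain ⟨e1, e2⟩ := mul_add_inj (show ℓ-1-(j : ℕ) < ℓ by omega)
         (show ℓ-1-(j' : ℕ) < ℓ by omega) hh
       simp only [Prod.mk.injEq, Fin.ext_iff]; omega)
    | -- block 4 = block 4
      (have hh : (n-1-(i : ℕ)) * (n-ℓ) + (n-1-(j : ℕ))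
           = (n-1-(i' : ℕ)) * (n-ℓ) + (n-1-(j' : ℕ)) := by omega
       obtain ⟨e1, e2⟩ := mul_add_inj (show n-1-(j : ℕ) < n-ℓ by omega)
         (show n-1-(j' : ℕ) < n-ℓ by omega) hh
       simp only [Prod.mk.injEq, Fin.ext_iff]; omega)
    | -- cross blocks: contradiction
      (exfalso
       first
       | (have c1 : (i : ℕ)*ℓ + (j : ℕ) < k*ℓ := blk_lt (by omega) (by omega)
          try have c4' : (n-1-(i' : ℕ))*(n-ℓ) + (n-1-(j' : ℕ)) < (n-k)*(n-ℓ) :=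
            blk_lt (by omega) (by omega)
          have c2' : (k-1-(i' : ℕ))*(n-ℓ) + ((j' : ℕ)-ℓ) < k*(n-ℓ) := blk_lt (by omega) (by omega)
          have c3' : ((i' : ℕ)-k)*ℓ + (ℓ-1-(j' : ℕ)) < (n-k)*ℓ := blk_lt (by omega) (by omega)
          omega)
       | (have c1' : (i' : ℕ)*ℓ + (j' : ℕ) < k*ℓ := blk_lt (by omega) (by omega)
          try have c4 : (n-1-(i : ℕ))*(n-ℓ) + (n-1-(j : ℕ)) < (n-k)*(n-ℓ) :=
            blk_lt (by omega) (by omega)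
          have c2 : (k-1-(i : ℕ))*(n-ℓ) + ((j : ℕ)-ℓ) < k*(n-ℓ) := blk_lt (by omega) (by omega)
          have c3 : ((i : ℕ)-k)*ℓ + (ℓ-1-(j : ℕ)) < (n-k)*ℓ := blk_lt (by omega) (by omega)
          omega)
       | (have c4 : (n-1-(i : ℕ))*(n-ℓ) + (n-1-(j : ℕ)) < (n-k)*(n-ℓ) :=
            blk_lt (by omega) (by omega)
          have c2' : (k-1-(i' : ℕ))*(n-ℓ) + ((j' : ℕ)-ℓ) < k*(n-ℓ) := blk_lt (by omega) (by omega)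
          have c3' : ((i' : ℕ)-k)*ℓ + (ℓ-1-(j' : ℕ)) < (n-k)*ℓ := blk_lt (by omega) (by omega)
          omega)
       | (have c4' : (n-1-(i' : ℕ))*(n-ℓ) + (n-1-(j' : ℕ)) < (n-k)*(n-ℓ) :=
            blk_lt (by omega) (by omega)
          have c2 : (k-1-(i : ℕ))*(n-ℓ) + ((j : ℕ)-ℓ) < k*(n-ℓ) := blk_lt (by omega) (by omega)
          have c3 : ((i : ℕ)-k)*ℓ + (ℓ-1-(j : ℕ)) < (n-k)*ℓ := blk_lt (by omega) (by omega)
          omega)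
       | (have c2 : (k-1-(i : ℕ))*(n-ℓ) + ((j : ℕ)-ℓ) < k*(n-ℓ) := blk_lt (by omega) (by omega)
          have c3 : ((i : ℕ)-k)*ℓ + (ℓ-1-(j : ℕ)) < (n-k)*ℓ := blk_lt (by omega) (by omega)
          have c2' : (k-1-(i' : ℕ))*(n-ℓ) + ((j' : ℕ)-ℓ) < k*(n-ℓ) := blk_lt (by omega) (by omega)
          have c3' : ((i' : ℕ)-k)*ℓ + (ℓ-1-(j' : ℕ)) < (n-k)*ℓ := blk_lt (by omega) (by omega)
          omega))
  · -- row ascending: i < k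
    intro i j j' ht hlt
    have hik : (i : ℕ) < k := by
      have h1 := hr i; rw [ht] at h1; exact of_decide_eq_true h1.symm
    have hjn := j.isLt; have hj'n := j'.isLt
    have hlt' : (j : ℕ) < (j' : ℕ) := hlt
    dsimp only
    split_ifs <;> try omega
    have c1 : (i : ℕ)*ℓ + (j : ℕ) < k*ℓ := blk_lt (by omega) (by omega)
    omega
  · -- row descending: i ≥ k
    intro i j j' hf hlt
    have hik : ¬ (i : ℕ) < k := by
      have h1 := hr i; rw [hf] at h1
      intro hc'; rw [(decide_eq_true hc' : decide ((i : ℕ) < k) = true)] at h1; exact absurd h1.symm (by simp)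
    have hin := i.isLt; have hjn := j.isLt; have hj'n := j'.isLt
    have hlt' : (j : ℕ) < (j' : ℕ) := hlt
    dsimp only
    split_ifs <;> try omega
    have c4 : (n-1-(i : ℕ))*(n-ℓ) + (n-1-(j' : ℕ)) < (n-k)*(n-ℓ) := blk_lt (by omega) (by omega)
    omega
  · -- column ascending: j < ℓ
    intro j i i' ht hlt
    have hjl : (j : ℕ) < ℓ := by
      have h1 := hc j; rw [ht] at h1; exact of_decide_eq_true h1.symm
    have hin := i.isLt; have hi'n := i'.isLt
    have hlt' : (i : ℕ) < (i' : ℕ) := hlt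
    dsimp only
    split_ifs <;> try omega
    · -- both < k
      have : (i : ℕ) * ℓ < (i' : ℕ) * ℓ := Nat.mul_lt_mul_of_lt_of_le hlt' le_rfl (by omega)
      omega
    · -- i < k ≤ i'
      have c1 : (i : ℕ)*ℓ + (j : ℕ) < k*ℓ := blk_lt (by omega) (by omega)
      omega
    · -- both ≥ k
      have : ((i : ℕ) - k) * ℓ < ((i' : ℕ) - k) * ℓ :=
        Nat.mul_lt_mul_of_lt_of_le (by omega) le_rfl (by omega)
      omega
  · -- column descending: j ≥ ℓ
    intro j i i' hf hlt
    have hjl : ¬ (j : ℕ) < ℓ := by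
      have h1 := hc j; rw [hf] at h1
      intro hc'; rw [(decide_eq_true hc' : decide ((j : ℕ) < ℓ) = true)] at h1; exact absurd h1.symm (by simp)
    have hin := i.isLt; have hi'n := i'.isLt; have hjn := j.isLt
    have hlt' : (i : ℕ) < (i' : ℕ) := hlt
    dsimp only
    split_ifs <;> try omega
    · -- both < k
      have : (k-1-(i' : ℕ)) * (n-ℓ) < (k-1-(i : ℕ)) * (n-ℓ) :=
        Nat.mul_lt_mul_of_lt_of_le (by omega) le_rfl (by omega)
      omega
    · -- i < k ≤ i'
      have c4 : (n-1-(i' : ℕ))*(n-ℓ) + (n-1-(j : ℕ)) < (n-k)*(n-ℓ) := blk_lt (by omega) (by omega)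
      omega
    · -- both ≥ k
      have : (n-1-(i' : ℕ)) * (n-ℓ) < (n-1-(i : ℕ)) * (n-ℓ) :=
        Nat.mul_lt_mul_of_lt_of_le (by omega) le_rfl (by omega)
      omega
end Constructions

section Symmetry
variable {n : ℕ} {r c : Fin n → Bool}

private lemma solvable_transpose (h : Solvable n r c) : Solvable n c r := by
  obtain ⟨g, hb, hrow, hcol⟩ := h
  exact ⟨fun p => g (p.2, p.1), hb.comp Prod.swap_bijective, hcol, hrow⟩

private lemma solvable_compl (h : Solvable n r c) :
    Solvable n (fun i => !(r i)) (fun j => !(c j)) := by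
  obtain ⟨g, hb, hrow, hcol⟩ := h
  refine ⟨fun p => (g p).rev, (Fin.rev_involutive.bijective).comp hb, ?_, ?_⟩
  · intro i
    have hi := hrow i
    cases hri : r i with
    | false =>
      rw [hri] at hi; simp only [Bool.false_eq_true, if_false] at hi
      simp only [hri, Bool.not_false, if_true]
      intro a b hab
      exact Fin.rev_lt_rev.mpr (hi hab)
    | true =>
      rw [hri] at hi; simp only [if_true] at hi
      simp only [hri, Bool.not_true, Bool.false_eq_true, if_false]
      intro a b hab
      exact Fin.rev_lt_rev.mpr (hi hab)
  · intro j
    have hj := hcol j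
    cases hcj : c j with
    | false =>
      rw [hcj] at hj; simp only [Bool.false_eq_true, if_false] at hj
      simp only [hcj, Bool.not_false, if_true]
      intro a b hab
      exact Fin.rev_lt_rev.mpr (hj hab)
    | true =>
      rw [hcj] at hj; simp only [if_true] at hj
      simp only [hcj, Bool.not_true, Bool.false_eq_true, if_false]
      intro a b hab
      exact Fin.rev_lt_rev.mpr (hj hab)
end Symmetry

section Patterns
variable {n : ℕ} {r c : Fin n → Bool}

private lemma pattern1 (h : Solvable n r c) {i1 i2 j1 j2 : Fin n} (hi : i1 < i2) (hj : j1 < j2)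
    (h1 : r i1 = false) (h2 : r i2 = true) (h3 : c j1 = true) (h4 : c j2 = false) : False := by
  obtain ⟨g, _, hrow, hcol⟩ := h
  have A := hrow i1; rw [h1] at A; simp only [Bool.false_eq_true, if_false] at A
  have B := hrow i2; rw [h2] at B; simp only [if_true] at B
  have C := hcol j1; rw [h3] at C; simp only [if_true] at C
  have D := hcol j2; rw [h4] at D; simp only [Bool.false_eq_true, if_false] at D
  have ha : g (i1, j2) < g (i1, j1) := A hj
  have hbb : g (i2, j1) < g (i2, j2) := B hj
  have hcc : g (i1, j1) < g (i2, j1) := C hi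
  have hd : g (i2, j2) < g (i1, j2) := D hi
  exact lt_irrefl _ (((ha.trans hcc).trans hbb).trans hd)

private lemma pattern2 (h : Solvable n r c) {i1 i2 j1 j2 : Fin n} (hi : i1 < i2) (hj : j1 < j2)
    (h1 : r i1 = true) (h2 : r i2 = false) (h3 : c j1 = false) (h4 : c j2 = true) : False := by
  obtain ⟨g, _, hrow, hcol⟩ := h
  have A := hrow i1; rw [h1] at A; simp only [if_true] at A
  have B := hrow i2; rw [h2] at B; simp only [Bool.false_eq_true, if_false] at B
  have C := hcol j1; rw [h3] at C; simp only [Bool.false_eq_true, if_false] at C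
  have D := hcol j2; rw [h4] at D; simp only [if_true] at D
  have ha : g (i1, j1) < g (i1, j2) := A hj
  have hbb : g (i2, j2) < g (i2, j1) := B hj
  have hcc : g (i2, j1) < g (i1, j1) := C hi
  have hd : g (i1, j2) < g (i2, j2) := D hi
  exact lt_irrefl _ (((ha.trans hd).trans hbb).trans hcc)
end Patterns

section BoolChar
variable {n : ℕ}

private lemma nonconst_exists {f : Fin n → Bool} (hnc : ¬ ∃ b, ∀ i, f i = b) :
    (∃ i, f i = true) ∧ (∃ i, f i = false) := by
  push_neg at hnc
  obtain ⟨i1, h1⟩ := hnc false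
  obtain ⟨i2, h2⟩ := hnc true
  exact ⟨⟨i1, by revert h1; cases f i1 <;> simp⟩, ⟨i2, by revert h2; cases f i2 <;> simp⟩⟩

/-- No `D` before `A` and nonconstant implies the `A^k D^{n-k}` shape. -/
private lemma bool_char_lt (f : Fin n → Bool) (hnc : ¬ ∃ b, ∀ i, f i = b)
    (hno : ¬ ∃ i i' : Fin n, i < i' ∧ f i = false ∧ f i' = true) :
    ∃ k, 1 ≤ k ∧ k ≤ n - 1 ∧ ∀ i, f i = decide ((i : ℕ) < k) := by
  obtain ⟨⟨it, hit⟩, ⟨ifl, hifl⟩⟩ := nonconst_exists hnc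
  have hS : (univ.filter fun i => f i = false).Nonempty := ⟨ifl, by simp [hifl]⟩
  set k0 := (univ.filter fun i => f i = false).min' hS with hk0
  have hk0f : f k0 = false := by
    have := Finset.min'_mem (univ.filter fun i => f i = false) hS
    simpa using this
  have hmin : ∀ i, f i = false → k0 ≤ i := fun i hi => Finset.min'_le _ _ (by simp [hi])
  have hform : ∀ i : Fin n, f i = decide ((i : ℕ) < (k0 : ℕ)) := by
    intro i
    rcases Nat.lt_or_ge (i : ℕ) (k0 : ℕ) with h | h
    · have hft : f i = true := by
        cases hq : f i with
        | true => rfl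
        | false =>
          have := hmin i hq
          rw [Fin.le_def] at this; omega
      rw [hft]; symm; simpa using h
    · have hff : f i = false := by
        rcases Nat.eq_or_lt_of_le h with he | hlt
        · have : i = k0 := Fin.ext he.symm
          rw [this]; exact hk0f
        · cases hq : f i with
          | false => rfl
          | true => exact absurd ⟨k0, i, Fin.lt_def.mpr hlt, hk0f, hq⟩ hno
      rw [hff]; symm; simp only [decide_eq_false_iff_not]; omega
  refine ⟨(k0 : ℕ), ?_, ?_, hform⟩
  · by_contra hz
    have hz' : (k0 : ℕ) = 0 := by omega
    have := hform it
    rw [hit, hz'] at this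
    simp at this
  · have := k0.isLt; omega

/-- No `A` before `D` and nonconstant implies the `D^k A^{n-k}` shape. -/
private lemma bool_char_ge (f : Fin n → Bool) (hnc : ¬ ∃ b, ∀ i, f i = b)
    (hno : ¬ ∃ i i' : Fin n, i < i' ∧ f i = true ∧ f i' = false) :
    ∃ k, 1 ≤ k ∧ k ≤ n - 1 ∧ ∀ i, f i = decide (k ≤ (i : ℕ)) := by
  obtain ⟨⟨it, hit⟩, ⟨ifl, hifl⟩⟩ := nonconst_exists hnc
  have hS : (univ.filter fun i => f i = true).Nonempty := ⟨it, by simp [hit]⟩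
  set k0 := (univ.filter fun i => f i = true).min' hS with hk0
  have hk0f : f k0 = true := by
    have := Finset.min'_mem (univ.filter fun i => f i = true) hS
    simpa using this
  have hmin : ∀ i, f i = true → k0 ≤ i := fun i hi => Finset.min'_le _ _ (by simp [hi])
  have hform : ∀ i : Fin n, f i = decide ((k0 : ℕ) ≤ (i : ℕ)) := by
    intro i
    rcases Nat.lt_or_ge (i : ℕ) (k0 : ℕ) with h | h
    · have hff : f i = false := by
        cases hq : f i with
        | false => rfl
        | true =>
          have := hmin i hq
          rw [Fin.le_def] at this; omega
      rw [hff]; symm; simp only [decide_eq_false_iff_not]; omega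
    · have hft : f i = true := by
        rcases Nat.eq_or_lt_of_le h with he | hlt
        · have : i = k0 := Fin.ext he.symm
          rw [this]; exact hk0f
        · cases hq : f i with
          | true => rfl
          | false => exact absurd ⟨k0, i, Fin.lt_def.mpr hlt, hk0f, hq⟩ hno
      rw [hft]; symm; simpa using h
  refine ⟨(k0 : ℕ), ?_, ?_, hform⟩
  · by_contra hz
    have hz' : (k0 : ℕ) = 0 := by omega
    have := hform ifl
    rw [hifl, hz'] at this
    simp at this
  · have := k0.isLt; omega
end BoolChar

/-- Characterization of solvable sorting match puzzles. -/
theorem solvable_iff_characterization (n : ℕ) (hn : 2 ≤ n) (r c : Fin n → Bool) :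
    Solvable n r c ↔
      (∃ b : Bool, ∀ i, r i = b) ∨
      (∃ b : Bool, ∀ j, c j = b) ∨
      (∃ k ℓ : ℕ, 1 ≤ k ∧ k ≤ n - 1 ∧ 1 ≤ ℓ ∧ ℓ ≤ n - 1 ∧
        (∀ i, r i = decide (i.val < k)) ∧ (∀ j, c j = decide (j.val < ℓ))) ∨
      (∃ k ℓ : ℕ, 1 ≤ k ∧ k ≤ n - 1 ∧ 1 ≤ ℓ ∧ ℓ ≤ n - 1 ∧
        (∀ i, r i = decide (k ≤ i.val)) ∧ (∀ j, c j = decide (ℓ ≤ j.val))) := by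
  have hn0 : 0 < n := by omega
  constructor
  · intro hs
    by_cases hrc : ∃ b, ∀ i, r i = b
    · exact Or.inl hrc
    by_cases hcc : ∃ b, ∀ j, c j = b
    · exact Or.inr (Or.inl hcc)
    by_cases hDA : ∃ i i' : Fin n, i < i' ∧ r i = false ∧ r i' = true
    · -- r has a D before an A; then c has no A before D, so c = D^ℓ A^{n-ℓ}
      have hcNoAD : ¬ ∃ j j' : Fin n, j < j' ∧ c j = true ∧ c j' = false := by
        rintro ⟨j1, j2, hj, hc1, hc2⟩
        obtain ⟨i1, i2, hi, h1, h2⟩ := hDA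
        exact pattern1 hs hi hj h1 h2 hc1 hc2
      obtain ⟨ℓ, hl1, hl2, hcform⟩ := bool_char_ge c hcc hcNoAD
      have hrNoAD : ¬ ∃ i i' : Fin n, i < i' ∧ r i = true ∧ r i' = false := by
        rintro ⟨i1, i2, hi, h1, h2⟩
        have hℓn : ℓ < n := by omega
        have hj0 : c ⟨0, hn0⟩ = false := by
          rw [hcform]; simp only [decide_eq_false_iff_not]; simpa using by omega
        have hjl : c ⟨ℓ, hℓn⟩ = true := by
          rw [hcform]; simp
        exact pattern2 hs hi (show (⟨0, hn0⟩ : Fin n) < ⟨ℓ, hℓn⟩ from Fin.mk_lt_mk.mpr (by omega))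
          h1 h2 hj0 hjl
      obtain ⟨k, hk1, hk2, hrform⟩ := bool_char_ge r hrc hrNoAD
      exact Or.inr (Or.inr (Or.inr ⟨k, ℓ, hk1, hk2, hl1, hl2, hrform, hcform⟩))
    · -- r has no D before A, so r = A^k D^{n-k}
      obtain ⟨k, hk1, hk2, hrform⟩ := bool_char_lt r hrc hDA
      have hcNoDA : ¬ ∃ j j' : Fin n, j < j' ∧ c j = false ∧ c j' = true := by
        rintro ⟨j1, j2, hj, hc1, hc2⟩
        have hkn : k < n := by omega
        have hi0 : r ⟨0, hn0⟩ = true := by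
          rw [hrform]; simp only [decide_eq_true_eq]; omega
        have hik : r ⟨k, hkn⟩ = false := by
          rw [hrform]; simp
        exact pattern2 hs (show (⟨0, hn0⟩ : Fin n) < ⟨k, hkn⟩ from Fin.mk_lt_mk.mpr (by omega))
          hj hi0 hik hc1 hc2
      obtain ⟨ℓ, hl1, hl2, hcform⟩ := bool_char_lt c hcc hcNoDA
      exact Or.inr (Or.inr (Or.inl ⟨k, ℓ, hk1, hk2, hl1, hl2, hrform, hcform⟩))
  · rintro (⟨b, hb⟩ | ⟨b, hb⟩ | ⟨k, ℓ, hk1, hk2, hl1, hl2, hr, hc⟩ |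
      ⟨k, ℓ, hk1, hk2, hl1, hl2, hr, hc⟩)
    · -- r constant
      cases b with
      | true =>
        have er : r = fun _ => true := funext hb
        rw [er]
        exact solvable_allA c hn0
      | false =>
        have h1 : Solvable n (fun _ => true) (fun j => !(c j)) :=
          solvable_allA (fun j => !(c j)) hn0
        have h2 := solvable_compl h1
        have er : r = fun _ => !(true : Bool) := funext fun i => by rw [hb i]; rfl
        have ec : c = fun j => !(!(c j)) := funext fun j => (Bool.not_not _).symm
        rw [er, ec]
        exact h2
    · -- c constant
      apply solvable_transpose
      cases b with
      | true =>
        have ec : c = fun _ => true := funext hb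
        rw [ec]
        exact solvable_allA r hn0
      | false =>
        have h1 : Solvable n (fun _ => true) (fun i => !(r i)) :=
          solvable_allA (fun i => !(r i)) hn0
        have h2 := solvable_compl h1
        have ec : c = fun _ => !(true : Bool) := funext fun j => by rw [hb j]; rfl
        have er : r = fun i => !(!(r i)) := funext fun i => (Bool.not_not _).symm
        rw [ec, er]
        exact h2
    · exact solvable_stair r c k ℓ hk1 hk2 hl1 hl2 hr hc
    · -- reversed staircase: complement of the staircase
      have h1 : Solvable n (fun i => decide ((i : ℕ) < k)) (fun j => decide ((j : ℕ) < ℓ)) :=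
        solvable_stair _ _ k ℓ hk1 hk2 hl1 hl2 (fun _ => rfl) (fun _ => rfl)
      have h2 := solvable_compl h1
      have er : r = fun i : Fin n => !(decide ((i : ℕ) < k)) := funext fun i => by
        rw [hr i]
        by_cases h : (i : ℕ) < k
        · simp [h, show ¬ k ≤ (i : ℕ) by omega]
        · simp [h, show k ≤ (i : ℕ) by omega]
      have ec : c = fun j : Fin n => !(decide ((j : ℕ) < ℓ)) := funext fun j => by
        rw [hc j]
        by_cases h : (j : ℕ) < ℓ
        · simp [h, show ¬ ℓ ≤ (j : ℕ) by omega]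
        · simp [h, show ℓ ≤ (j : ℕ) by omega]
      rw [er, ec]
      exact h2
end

section
/- In any valid solution of the sorting match puzzle of order n with first k rows labeled A (remaining D) and first ℓ columns labeled A (remaining D), where 1 ≤ k, ℓ ≤ n−1, every entry located in the top-left k×ℓ subgrid or the bottom-right (n−k)×(n−ℓ) subgrid is strictly smaller than every entry located in the top-right k×(n−ℓ) subgrid or the bottom-left (n−k)×ℓ subgrid. Consequently the values 1 through kℓ + (n−k)(n−ℓ) occupy exactly the union of the top-left and bottom-right subgrids. -/
lemma card_filter_val_lt (N m : ℕ) (h : m ≤ N) :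
    (Finset.univ.filter (fun v : Fin N => v.val < m)).card = m := by
  have hmap : (Finset.univ : Finset (Fin m)).map (Fin.castLEEmb h) =
      Finset.univ.filter (fun v : Fin N => v.val < m) := by
    ext v
    simp only [Finset.mem_map, Finset.mem_univ, true_and, Finset.mem_filter,
      Fin.castLEEmb, Function.Embedding.coeFn_mk]
    constructor
    · rintro ⟨a, rfl⟩; exact a.isLt
    · intro hv; exact ⟨⟨v, hv⟩, rfl⟩
  rw [← hmap, Finset.card_map, Finset.card_univ, Fintype.card_fin]

lemma card_filter_val_not_lt (N m : ℕ) (h : m ≤ N) :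
    (Finset.univ.filter (fun v : Fin N => ¬ v.val < m)).card = N - m := by
  have h1 := Finset.card_filter_add_card_filter_not
    (s := (Finset.univ : Finset (Fin N))) (p := fun v : Fin N => v.val < m)
  have h2 := card_filter_val_lt N m h
  simp only [Finset.card_univ, Fintype.card_fin] at h1
  omega

/-- In any solution with parameters `k, ℓ`, entries of the NW and SE subgrids are
smaller than entries of the NE and SW subgrids; consequently, the smallest
`kℓ + (n-k)(n-ℓ)` values occupy exactly `NW ∪ SE`. -/
theorem small_values_in_NW_SE (n k ℓ : ℕ) (hk1 : 1 ≤ k) (hk2 : k ≤ n - 1)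
    (hl1 : 1 ≤ ℓ) (hl2 : ℓ ≤ n - 1) (g : Fin n × Fin n → Fin (n ^ 2))
    (hg : IsSolution n (fun i => decide (i.val < k)) (fun j => decide (j.val < ℓ)) g) :
    (∀ p q : Fin n × Fin n,
        ((p.1.val < k ∧ p.2.val < ℓ) ∨ (k ≤ p.1.val ∧ ℓ ≤ p.2.val)) →
        ((q.1.val < k ∧ ℓ ≤ q.2.val) ∨ (k ≤ q.1.val ∧ q.2.val < ℓ)) →
        g p < g q) ∧
    (∀ p : Fin n × Fin n,
        (g p).val < k * ℓ + (n - k) * (n - ℓ) ↔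
          ((p.1.val < k ∧ p.2.val < ℓ) ∨ (k ≤ p.1.val ∧ ℓ ≤ p.2.val))) := by
  obtain ⟨hbij, hrow, hcol⟩ := hg
  have hkn : k < n := by omega
  have hln : ℓ < n := by omega
  have hrowA : ∀ i : Fin n, i.val < k → StrictMono (fun j => g (i, j)) := by
    intro i hi; have := hrow i; simpa [hi] using this
  have hrowD : ∀ i : Fin n, ¬ i.val < k → StrictAnti (fun j => g (i, j)) := by
    intro i hi; have := hrow i; simpa [hi] using this
  have hcolA : ∀ j : Fin n, j.val < ℓ → StrictMono (fun i => g (i, j)) := by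
    intro j hj; have := hcol j; simpa [hj] using this
  have hcolD : ∀ j : Fin n, ¬ j.val < ℓ → StrictAnti (fun i => g (i, j)) := by
    intro j hj; have := hcol j; simpa [hj] using this
  have main : ∀ p q : Fin n × Fin n,
      ((p.1.val < k ∧ p.2.val < ℓ) ∨ (k ≤ p.1.val ∧ ℓ ≤ p.2.val)) →
      ((q.1.val < k ∧ ℓ ≤ q.2.val) ∨ (k ≤ q.1.val ∧ q.2.val < ℓ)) →
      g p < g q := by
    rintro ⟨i, j⟩ ⟨i', j'⟩ (⟨hik, hjl⟩ | ⟨hik, hjl⟩) (⟨hik', hjl'⟩ | ⟨hik', hjl'⟩) <;>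
      dsimp only at hik hjl hik' hjl'
    · -- NW < NE
      rcases le_or_gt i.val i'.val with hii | hii
      · exact lt_of_le_of_lt ((hcolA j hjl).monotone (Fin.le_def.mpr hii))
          (hrowA i' hik' (Fin.lt_def.mpr (by omega)))
      · exact lt_trans (hrowA i hik (Fin.lt_def.mpr (by omega)))
          (hcolD j' (by omega) (Fin.lt_def.mpr hii))
    · -- NW < SW
      rcases le_or_gt j.val j'.val with hjj | hjj
      · exact lt_of_le_of_lt ((hrowA i hik).monotone (Fin.le_def.mpr hjj))
          (hcolA j' hjl' (Fin.lt_def.mpr (by omega)))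
      · exact lt_trans (hcolA j hjl (Fin.lt_def.mpr (by omega)))
          (hrowD i' (by omega) (Fin.lt_def.mpr hjj))
    · -- SE < NE
      rcases le_or_gt j.val j'.val with hjj | hjj
      · exact lt_of_lt_of_le (hcolD j (by omega) (Fin.lt_def.mpr (by omega)))
          ((hrowA i' hik').monotone (Fin.le_def.mpr hjj))
      · exact lt_trans (hrowD i (by omega) (Fin.lt_def.mpr hjj))
          (hcolD j' (by omega) (Fin.lt_def.mpr (by omega)))
    · -- SE < SW
      rcases le_or_gt i.val i'.val with hii | hii
      · exact lt_of_lt_of_le (hrowD i (by omega) (Fin.lt_def.mpr (by omega)))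
          ((hcolA j' hjl').monotone (Fin.le_def.mpr hii))
      · exact lt_trans (hcolD j (by omega) (Fin.lt_def.mpr hii))
          (hrowD i' (by omega) (Fin.lt_def.mpr (by omega)))
  refine ⟨main, ?_⟩
  set m := k * ℓ + (n - k) * (n - ℓ) with hm
  set S : Finset (Fin n × Fin n) := Finset.univ.filter
    (fun p => (p.1.val < k ∧ p.2.val < ℓ) ∨ (k ≤ p.1.val ∧ ℓ ≤ p.2.val)) with hS
  have hcardA : (Finset.univ.filter (fun i : Fin n => i.val < k)).card = k :=
    card_filter_val_lt n k hkn.le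
  have hcardB : (Finset.univ.filter (fun j : Fin n => j.val < ℓ)).card = ℓ :=
    card_filter_val_lt n ℓ hln.le
  have hcardA' : (Finset.univ.filter (fun i : Fin n => ¬ i.val < k)).card = n - k :=
    card_filter_val_not_lt n k hkn.le
  have hcardB' : (Finset.univ.filter (fun j : Fin n => ¬ j.val < ℓ)).card = n - ℓ :=
    card_filter_val_not_lt n ℓ hln.le
  have hSeq : S =
      (Finset.univ.filter (fun i : Fin n => i.val < k)) ×ˢ
        (Finset.univ.filter (fun j : Fin n => j.val < ℓ)) ∪
      (Finset.univ.filter (fun i : Fin n => ¬ i.val < k)) ×ˢ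
        (Finset.univ.filter (fun j : Fin n => ¬ j.val < ℓ)) := by
    ext p
    simp only [hS, Finset.mem_union, Finset.mem_product,
      Finset.mem_filter, Finset.mem_univ, true_and]
    omega
  have hdisj : Disjoint
      ((Finset.univ.filter (fun i : Fin n => i.val < k)) ×ˢ
        (Finset.univ.filter (fun j : Fin n => j.val < ℓ)))
      ((Finset.univ.filter (fun i : Fin n => ¬ i.val < k)) ×ˢ
        (Finset.univ.filter (fun j : Fin n => ¬ j.val < ℓ))) := by
    rw [Finset.disjoint_left]
    rintro p hp hp'
    simp only [Finset.mem_product, Finset.mem_filter, Finset.mem_univ, true_and] at hp hp'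
    omega
  have hcardS : S.card = m := by
    rw [hSeq, Finset.card_union_of_disjoint hdisj, Finset.card_product,
      Finset.card_product, hcardA, hcardB, hcardA', hcardB']
  have hmn : m ≤ n ^ 2 := by
    have h1 : n ^ 2 = (k + (n - k)) * (ℓ + (n - ℓ)) := by
      rw [pow_two]; congr 1 <;> omega
    have h2 : (k + (n - k)) * (ℓ + (n - ℓ)) =
        k * ℓ + (n - k) * (n - ℓ) + (k * (n - ℓ) + (n - k) * ℓ) := by ring
    omega
  have hScard_compl : Sᶜ.card = n ^ 2 - m := by
    rw [Finset.card_compl, hcardS]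
    congr 1
    rw [Fintype.card_prod, Fintype.card_fin, pow_two]
  intro p
  constructor
  · intro hlt
    by_contra hp
    have hp' : (p.1.val < k ∧ ℓ ≤ p.2.val) ∨ (k ≤ p.1.val ∧ p.2.val < ℓ) := by omega
    have hpS : p ∉ S := by
      simp only [hS, Finset.mem_filter, Finset.mem_univ, true_and]; exact hp
    have hmaps : ∀ q ∈ insert p S, g q ∈
        Finset.univ.filter (fun v : Fin (n ^ 2) => v.val < m) := by
      intro q hq
      rcases Finset.mem_insert.mp hq with rfl | hq
      · simp only [Finset.mem_filter, Finset.mem_univ, true_and]; exact hlt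
      · simp only [hS, Finset.mem_filter, Finset.mem_univ, true_and] at hq
        have := main q p hq hp'
        simp only [Finset.mem_filter, Finset.mem_univ, true_and]
        omega
    have hle := Finset.card_le_card_of_injOn g hmaps
      (Set.InjOn.mono (Set.subset_univ _) (Function.Injective.injOn hbij.injective))
    rw [Finset.card_insert_of_notMem hpS, hcardS,
      card_filter_val_lt (n ^ 2) m hmn] at hle
    omega
  · intro hp
    by_contra hge
    have hge' : m ≤ (g p).val := by omega
    have hpS : p ∉ Sᶜ := by
      simp only [Finset.mem_compl, hS, Finset.mem_filter, Finset.mem_univ,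
        true_and, not_not]
      exact hp
    have hmaps : ∀ q ∈ insert p Sᶜ, g q ∈
        Finset.univ.filter (fun v : Fin (n ^ 2) => ¬ v.val < m) := by
      intro q hq
      rcases Finset.mem_insert.mp hq with rfl | hq
      · simp only [Finset.mem_filter, Finset.mem_univ, true_and]; omega
      · simp only [Finset.mem_compl, hS, Finset.mem_filter, Finset.mem_univ,
          true_and] at hq
        have hq' : (q.1.val < k ∧ ℓ ≤ q.2.val) ∨ (k ≤ q.1.val ∧ q.2.val < ℓ) := by omega
        have := main p q hp hq'
        simp only [Finset.mem_filter, Finset.mem_univ, true_and]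
        omega
    have hle := Finset.card_le_card_of_injOn g hmaps
      (Set.InjOn.mono (Set.subset_univ _) (Function.Injective.injOn hbij.injective))
    rw [Finset.card_insert_of_notMem hpS, hScard_compl,
      card_filter_val_not_lt (n ^ 2) m hmn] at hle
    omega
end

section
/- The number of solutions of the sorting match puzzle of order n with parameters k, ℓ ∈ {1,…,n−1} (first k rows A, rest D; first ℓ columns A, rest D) equals C(L, kℓ) · C(n² − L, (n−k)ℓ) · H(k,ℓ) · H(n−k, n−ℓ) · H(k, n−ℓ) · H(n−k, ℓ), where L = kℓ + (n−k)(n−ℓ) and H(a,b) is the number of standard Young tableaux of rectangular shape a×b. -/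
/-- The number of standard Young tableaux of rectangular shape `a × b`. -/
noncomputable def SYT (a b : ℕ) : ℕ :=
  Nat.card {T : Fin a × Fin b → Fin (a * b) //
    Function.Bijective T ∧
    (∀ j : Fin b, StrictMono (fun i => T (i, j))) ∧
    (∀ i : Fin a, StrictMono (fun j => T (i, j)))}

open Function Sum

namespace SMP

def Respects {σ τ : Type*} [LT τ] (R : σ → σ → Prop) (f : σ → τ) : Prop :=
  ∀ ⦃x y⦄, R x y → f x < f y

theorem card_split {α β : Type*} [Fintype α] [Fintype β] [DecidableEq α] [DecidableEq β]
    (R : α ⊕ β → α ⊕ β → Prop) (N L M : ℕ)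
    (hL : Fintype.card α = L) (hM : Fintype.card β = M) (hN : L + M = N)
    (h1 : ∀ (x : α) (y : β), ¬ R (inr y) (inl x))
    (h2 : ∀ g : α ⊕ β → Fin N, Bijective g → Respects R g →
      ∀ (x : α) (y : β), g (inl x) < g (inr y)) :
    Nat.card {g : α ⊕ β → Fin N // Bijective g ∧ Respects R g} =
      Nat.card {g : α → Fin L // Bijective g ∧ Respects (fun a b => R (inl a) (inl b)) g} *
      Nat.card {g : β → Fin M // Bijective g ∧ Respects (fun a b => R (inr a) (inr b)) g} := by
  have hLN : L ≤ N := by omega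
  have low_lt : ∀ (g : α ⊕ β → Fin N), Bijective g → Respects R g →
      ∀ x : α, (g (inl x)).val < L := by
    intro g hb hr x
    have hsub : (Finset.univ.image (fun y : β => g (inr y))) ⊆ Finset.Ioi (g (inl x)) := by
      intro v hv
      simp only [Finset.mem_image, Finset.mem_univ, true_and] at hv
      obtain ⟨y, rfl⟩ := hv
      exact Finset.mem_Ioi.2 (h2 g hb hr x y)
    have hcard := Finset.card_le_card hsub
    rw [Finset.card_image_of_injective _ (fun a b hab => inr_injective (hb.1 hab)),
      Finset.card_univ, hM, Fin.card_Ioi] at hcard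
    have := (g (inl x)).isLt
    omega
  have high_ge : ∀ (g : α ⊕ β → Fin N), Bijective g → Respects R g →
      ∀ y : β, L ≤ (g (inr y)).val := by
    intro g hb hr y
    have hsub : (Finset.univ.image (fun x : α => g (inl x))) ⊆ Finset.Iio (g (inr y)) := by
      intro v hv
      simp only [Finset.mem_image, Finset.mem_univ, true_and] at hv
      obtain ⟨x, rfl⟩ := hv
      exact Finset.mem_Iio.2 (h2 g hb hr x y)
    have hcard := Finset.card_le_card hsub
    rw [Finset.card_image_of_injective _ (fun a b hab => inl_injective (hb.1 hab)),
      Finset.card_univ, hL, Fin.card_Iio] at hcard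
    exact hcard
  rw [← Nat.card_prod]
  apply Nat.card_congr
  refine
    { toFun := fun gp =>
        (⟨fun x => ⟨(gp.1 (inl x)).val, low_lt gp.1 gp.2.1 gp.2.2 x⟩, by
            rw [Fintype.bijective_iff_injective_and_card]
            refine ⟨fun a b hab => ?_, by simp [hL]⟩
            have := congrArg Fin.val hab
            simp only at this
            exact inl_injective (gp.2.1.1 (Fin.ext this)),
          fun a b hab => gp.2.2 hab⟩,
         ⟨fun y => ⟨(gp.1 (inr y)).val - L, by
              have := (gp.1 (inr y)).isLt
              have := high_ge gp.1 gp.2.1 gp.2.2 y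
              omega⟩, by
            rw [Fintype.bijective_iff_injective_and_card]
            refine ⟨fun a b hab => ?_, by simp [hM]⟩
            have e1 := high_ge gp.1 gp.2.1 gp.2.2 a
            have e2 := high_ge gp.1 gp.2.1 gp.2.2 b
            have := congrArg Fin.val hab
            simp only at this
            exact inr_injective (gp.2.1.1 (Fin.ext (by omega))),
          fun a b hab => by
            have := gp.2.2 hab
            have e1 := high_ge gp.1 gp.2.1 gp.2.2 a
            simp only [Fin.lt_def] at this ⊢
            omega⟩),
      invFun := fun pq =>
        ⟨fun u => match u with
          | inl x => ⟨(pq.1.1 x).val, by have := (pq.1.1 x).isLt; omega⟩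
          | inr y => ⟨L + (pq.2.1 y).val, by have := (pq.2.1 y).isLt; omega⟩, by
          constructor
          · rw [Fintype.bijective_iff_injective_and_card]
            constructor
            · rintro (x | y) (x' | y') h <;> simp only [Fin.mk.injEq] at h
              · exact congrArg inl (pq.1.2.1.1 (Fin.ext h))
              · exact absurd h (by have := (pq.1.1 x).isLt; omega)
              · exact absurd h (by have := (pq.1.1 x').isLt; omega)
              · exact congrArg inr (pq.2.2.1.1 (Fin.ext (by omega)))
            · simp [hL, hM, hN]
          · rintro (x | y) (x' | y') h
            · exact Fin.mk_lt_mk.2 (Fin.lt_def.1 (pq.1.2.2 h))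
            · exact Fin.mk_lt_mk.2 (by have := (pq.1.1 x).isLt; omega)
            · exact absurd h (h1 x' y)
            · exact Fin.mk_lt_mk.2 (by have := Fin.lt_def.1 (pq.2.2.2 h); omega)⟩,
      left_inv := by
        rintro ⟨g, hb, hr⟩
        apply Subtype.ext
        funext u
        cases u with
        | inl x => exact Fin.ext rfl
        | inr y =>
          refine Fin.ext ?_
          have := high_ge g hb hr y
          simp only
          omega,
      right_inv := by
        rintro ⟨⟨p, hp⟩, ⟨q, hq⟩⟩
        refine Prod.ext (Subtype.ext (funext fun x => Fin.ext ?_)) (Subtype.ext (funext fun y => Fin.ext ?_)) <;> simp }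

lemma symm_eq_of_apply {γ : Type*} [LinearOrder γ] {k : ℕ} {S S' : Finset γ}
    (hSS : S' = S) (h' : S'.card = k) (h : S.card = k) (u : Fin k) (v : γ) (hv : v ∈ S')
    (hval : v = ↑(S.orderIsoOfFin h u)) : (S'.orderIsoOfFin h').symm ⟨v, hv⟩ = u := by
  subst hSS
  subst hval
  have hh : h' = h := Subsingleton.elim _ _
  subst hh
  rw [Subtype.coe_eta]
  exact OrderIso.symm_apply_apply _ _

theorem card_product {α β : Type*} [Fintype α] [Fintype β] [DecidableEq α] [DecidableEq β]
    (R : α ⊕ β → α ⊕ β → Prop) (a b m : ℕ)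
    (ha : Fintype.card α = a) (hb : Fintype.card β = b) (hm : a + b = m)
    (h1 : ∀ (x : α) (y : β), ¬ R (inl x) (inr y))
    (h2 : ∀ (x : α) (y : β), ¬ R (inr y) (inl x)) :
    Nat.card {g : α ⊕ β → Fin m // Bijective g ∧ Respects R g} =
      m.choose a *
      Nat.card {p : α → Fin a // Bijective p ∧ Respects (fun u v => R (inl u) (inl v)) p} *
      Nat.card {q : β → Fin b // Bijective q ∧ Respects (fun u v => R (inr u) (inr v)) q} := by
  have key : Nat.card {g : α ⊕ β → Fin m // Bijective g ∧ Respects R g} =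
      Nat.card ({S : Finset (Fin m) // S.card = a} ×
        {p : α → Fin a // Bijective p ∧ Respects (fun u v => R (inl u) (inl v)) p} ×
        {q : β → Fin b // Bijective q ∧ Respects (fun u v => R (inr u) (inr v)) q}) := by
    apply Nat.card_congr
    have imgS : ∀ (g : α ⊕ β → Fin m), Bijective g →
        (Finset.univ.image (fun x : α => g (inl x))).card = a := by
      intro g hg
      rw [Finset.card_image_of_injective _ (fun u v huv => inl_injective (hg.1 huv)),
        Finset.card_univ, ha]
    have imgSc : ∀ (g : α ⊕ β → Fin m) (hg : Bijective g),
        (Finset.univ.image (fun x : α => g (inl x)))ᶜ.card = b := by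
      intro g hg
      rw [Finset.card_compl, imgS g hg, Fintype.card_fin]
      omega
    have memS : ∀ (g : α ⊕ β → Fin m) (x : α),
        g (inl x) ∈ Finset.univ.image (fun x : α => g (inl x)) := by
      intro g x
      exact Finset.mem_image.2 ⟨x, Finset.mem_univ x, rfl⟩
    have memSc : ∀ (g : α ⊕ β → Fin m) (hg : Bijective g) (y : β),
        g (inr y) ∈ (Finset.univ.image (fun x : α => g (inl x)))ᶜ := by
      intro g hg y
      rw [Finset.mem_compl, Finset.mem_image]
      rintro ⟨x, -, hx⟩
      exact (by simp : inl x ≠ inr y) (hg.1 hx)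
    refine
      { toFun := fun gp =>
          (⟨Finset.univ.image (fun x : α => gp.1 (inl x)), imgS gp.1 gp.2.1⟩,
           ⟨fun x => ((Finset.univ.image (fun x : α => gp.1 (inl x))).orderIsoOfFin
               (imgS gp.1 gp.2.1)).symm ⟨gp.1 (inl x), memS gp.1 x⟩, by
              rw [Fintype.bijective_iff_injective_and_card]
              refine ⟨fun u v huv => ?_, by simp [ha]⟩
              have := congrArg (fun z => (((Finset.univ.image (fun x : α => gp.1 (inl x))).orderIsoOfFin
                (imgS gp.1 gp.2.1)) z).val) huv
              simp only [OrderIso.apply_symm_apply] at this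
              exact inl_injective (gp.2.1.1 this), by
              intro u v huv
              rw [← OrderIso.lt_iff_lt ((Finset.univ.image (fun x : α => gp.1 (inl x))).orderIsoOfFin
                (imgS gp.1 gp.2.1))]
              simp only [OrderIso.apply_symm_apply]
              exact Subtype.mk_lt_mk.2 (gp.2.2 huv)⟩,
           ⟨fun y => (((Finset.univ.image (fun x : α => gp.1 (inl x)))ᶜ).orderIsoOfFin
               (imgSc gp.1 gp.2.1)).symm ⟨gp.1 (inr y), memSc gp.1 gp.2.1 y⟩, by
              rw [Fintype.bijective_iff_injective_and_card]
              refine ⟨fun u v huv => ?_, by simp [hb]⟩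
              have := congrArg (fun z => ((((Finset.univ.image (fun x : α => gp.1 (inl x)))ᶜ).orderIsoOfFin
                (imgSc gp.1 gp.2.1)) z).val) huv
              simp only [OrderIso.apply_symm_apply] at this
              exact inr_injective (gp.2.1.1 this), by
              intro u v huv
              rw [← OrderIso.lt_iff_lt (((Finset.univ.image (fun x : α => gp.1 (inl x)))ᶜ).orderIsoOfFin
                (imgSc gp.1 gp.2.1))]
              simp only [OrderIso.apply_symm_apply]
              exact Subtype.mk_lt_mk.2 (gp.2.2 huv)⟩),
        invFun := fun t =>
          ⟨fun u => match u with
            | inl x => ((t.1.1.orderIsoOfFin t.1.2) (t.2.1.1 x) : Fin m)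
            | inr y => (((t.1.1ᶜ).orderIsoOfFin (by rw [Finset.card_compl, t.1.2, Fintype.card_fin]; omega)) (t.2.2.1 y) : Fin m), by
            constructor
            · rw [Fintype.bijective_iff_injective_and_card]
              constructor
              · rintro (x | y) (x' | y') h <;> simp only at h
                · exact congrArg inl (t.2.1.2.1.1 ((t.1.1.orderIsoOfFin t.1.2).injective (Subtype.ext h)))
                · exact absurd ((t.1.1.orderIsoOfFin t.1.2) (t.2.1.1 x)).2
                    (by rw [h]; exact Finset.mem_compl.1 (((t.1.1ᶜ).orderIsoOfFin _) (t.2.2.1 y')).2)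
                · exact absurd ((t.1.1.orderIsoOfFin t.1.2) (t.2.1.1 x')).2
                    (by rw [← h]; exact Finset.mem_compl.1 (((t.1.1ᶜ).orderIsoOfFin _) (t.2.2.1 y)).2)
                · exact congrArg inr (t.2.2.2.1.1 (((t.1.1ᶜ).orderIsoOfFin _).injective (Subtype.ext h)))
              · simp [ha, hb, hm]
            · rintro (x | y) (x' | y') h
              · exact Subtype.coe_lt_coe.2 ((OrderIso.lt_iff_lt _).2 (t.2.1.2.2 h))
              · exact absurd h (h1 x y')
              · exact absurd h (h2 x' y)
              · exact Subtype.coe_lt_coe.2 ((OrderIso.lt_iff_lt _).2 (t.2.2.2.2 h))⟩,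
        left_inv := by
          rintro ⟨g, hg, hr⟩
          apply Subtype.ext
          funext u
          cases u with
          | inl x => simp
          | inr y => simp,
        right_inv := by
          rintro ⟨⟨S, hS⟩, ⟨p, hp⟩, ⟨q, hq⟩⟩
          have hSc : Sᶜ.card = b := by rw [Finset.card_compl, hS, Fintype.card_fin]; omega
          have himg : (Finset.univ.image (fun x : α => ((S.orderIsoOfFin hS) (p x) : Fin m))) = S := by
            apply Finset.eq_of_subset_of_card_le
            · intro v hv
              simp only [Finset.mem_image] at hv
              obtain ⟨x, -, rfl⟩ := hv
              exact ((S.orderIsoOfFin hS) (p x)).2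
            · have hinj : Injective (fun x : α => ((S.orderIsoOfFin hS) (p x) : Fin m)) :=
                fun u v huv => hp.1.1 ((S.orderIsoOfFin hS).injective (Subtype.ext huv))
              rw [Finset.card_image_of_injective _ hinj, Finset.card_univ, ha, hS]
          refine Prod.ext (Subtype.ext ?_) (Prod.ext (Subtype.ext ?_) (Subtype.ext ?_))
          · exact himg
          · funext x
            exact symm_eq_of_apply himg _ hS (p x) _ _ rfl
          · funext y
            exact symm_eq_of_apply (by rw [himg]) _ hSc (q y) _ _ rfl }
  rw [key, Nat.card_prod, Nat.card_prod, Nat.card_eq_fintype_card, Fintype.card_finset_len,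
    Fintype.card_fin, mul_assoc]

theorem card_relabel {σ σ' : Type*} (e : σ ≃ σ') (R : σ → σ → Prop) (R' : σ' → σ' → Prop)
    (hR : ∀ x y, R x y ↔ R' (e x) (e y)) (m m' : ℕ) (hm : m = m') :
    Nat.card {g : σ → Fin m // Bijective g ∧ Respects R g} =
      Nat.card {g : σ' → Fin m' // Bijective g ∧ Respects R' g} := by
  subst hm
  apply Nat.card_congr
  refine ⟨fun g => ⟨g.1 ∘ e.symm, g.2.1.comp e.symm.bijective, ?_⟩,
    fun g => ⟨g.1 ∘ e, g.2.1.comp e.bijective, ?_⟩, ?_, ?_⟩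
  · intro x y h
    exact g.2.2 ((hR _ _).2 (by simpa using h))
  · intro x y h
    exact g.2.2 ((hR _ _).1 h)
  · intro g
    exact Subtype.ext (funext fun x => by simp)
  · intro g
    exact Subtype.ext (funext fun x => by simp)

def RSYT (a b : ℕ) : (Fin a × Fin b) → (Fin a × Fin b) → Prop :=
  fun x y => (x.1 = y.1 ∧ x.2 < y.2) ∨ (x.2 = y.2 ∧ x.1 < y.1)

theorem SYT_eq (a b : ℕ) :
    SYT a b = Nat.card {T : Fin a × Fin b → Fin (a * b) //
      Bijective T ∧ Respects (RSYT a b) T} := by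
  apply Nat.card_congr
  apply Equiv.subtypeEquivRight
  intro T
  apply and_congr_right'
  constructor
  · rintro ⟨hc, hr⟩ ⟨x1, x2⟩ ⟨y1, y2⟩ (⟨h1, h2⟩ | ⟨h1, h2⟩)
    · cases h1; exact hr x1 h2
    · cases h1; exact hc x2 h2
  · intro h
    exact ⟨fun j i i' hii => h (Or.inr ⟨rfl, hii⟩), fun i j j' hjj => h (Or.inl ⟨rfl, hjj⟩)⟩

-- reversed variants
theorem SYT_eq_rev_both (a b : ℕ) (m : ℕ) (hm : a * b = m) :
    Nat.card {T : Fin a × Fin b → Fin m //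
      Bijective T ∧ Respects (fun x y : Fin a × Fin b =>
        (x.1 = y.1 ∧ y.2 < x.2) ∨ (x.2 = y.2 ∧ y.1 < x.1)) T} = SYT a b := by
  rw [SYT_eq]
  exact card_relabel (Equiv.prodCongr (Fin.revPerm) (Fin.revPerm)) _ _
    (by
      rintro ⟨x1, x2⟩ ⟨y1, y2⟩
      simp [RSYT, Fin.rev_lt_rev, Fin.rev_inj, eq_comm, and_comm]) m (a*b) hm.symm

theorem SYT_eq_rev_fst (a b : ℕ) (m : ℕ) (hm : a * b = m) :
    Nat.card {T : Fin a × Fin b → Fin m //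
      Bijective T ∧ Respects (fun x y : Fin a × Fin b =>
        (x.1 = y.1 ∧ x.2 < y.2) ∨ (x.2 = y.2 ∧ y.1 < x.1)) T} = SYT a b := by
  rw [SYT_eq]
  exact card_relabel (Equiv.prodCongr (Fin.revPerm) (Equiv.refl _)) _ _
    (by
      rintro ⟨x1, x2⟩ ⟨y1, y2⟩
      simp [RSYT, Fin.rev_lt_rev, Fin.rev_inj]) m (a*b) hm.symm

theorem SYT_eq_rev_snd (a b : ℕ) (m : ℕ) (hm : a * b = m) :
    Nat.card {T : Fin a × Fin b → Fin m //
      Bijective T ∧ Respects (fun x y : Fin a × Fin b =>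
        (x.1 = y.1 ∧ y.2 < x.2) ∨ (x.2 = y.2 ∧ x.1 < y.1)) T} = SYT a b := by
  rw [SYT_eq]
  exact card_relabel (Equiv.prodCongr (Equiv.refl _) (Fin.revPerm)) _ _
    (by
      rintro ⟨x1, x2⟩ ⟨y1, y2⟩
      simp [RSYT, Fin.rev_lt_rev, Fin.rev_inj]) m (a*b) hm.symm

theorem SYT_eq_id (a b : ℕ) (m : ℕ) (hm : a * b = m) :
    Nat.card {T : Fin a × Fin b → Fin m //
      Bijective T ∧ Respects (fun x y : Fin a × Fin b =>
        (x.1 = y.1 ∧ x.2 < y.2) ∨ (x.2 = y.2 ∧ x.1 < y.1)) T} = SYT a b := by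
  rw [SYT_eq]
  exact card_relabel (Equiv.refl _) _ _ (by intro x y; rfl) m (a*b) hm.symm

lemma respects_congr {σ τ : Type*} [LT τ] {R R' : σ → σ → Prop}
    (h : ∀ x y, R x y ↔ R' x y) (f : σ → τ) : Respects R f ↔ Respects R' f :=
  ⟨fun hf x y hxy => hf ((h x y).2 hxy), fun hf x y hxy => hf ((h x y).1 hxy)⟩

lemma card_resp_congr {σ : Type*} {R R' : σ → σ → Prop} (h : ∀ x y, R x y ↔ R' x y) (m : ℕ) :
    Nat.card {g : σ → Fin m // Function.Bijective g ∧ Respects R g} =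
      Nat.card {g : σ → Fin m // Function.Bijective g ∧ Respects R' g} :=
  Nat.card_congr (Equiv.subtypeEquivRight fun g => and_congr_right' (respects_congr h g))

def Rg (n k ℓ : ℕ) : (Fin n × Fin n) → (Fin n × Fin n) → Prop := fun x y =>
  (x.1 = y.1 ∧ ((x.1.val < k ∧ x.2.val < y.2.val) ∨ (k ≤ x.1.val ∧ y.2.val < x.2.val))) ∨
  (x.2 = y.2 ∧ ((x.2.val < ℓ ∧ x.1.val < y.1.val) ∨ (ℓ ≤ x.2.val ∧ y.1.val < x.1.val)))

lemma sol_iff (n k ℓ : ℕ) (g : Fin n × Fin n → Fin (n ^ 2)) :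
    IsSolution n (fun i => decide (i.val < k)) (fun j => decide (j.val < ℓ)) g ↔
      Function.Bijective g ∧ Respects (Rg n k ℓ) g := by
  unfold IsSolution
  apply and_congr_right'
  simp only [decide_eq_true_eq]
  constructor
  · rintro ⟨hrow, hcol⟩ ⟨x1, x2⟩ ⟨y1, y2⟩ (⟨h1, h2⟩ | ⟨h1, h2⟩)
    · cases h1
      rcases h2 with ⟨hk, hlt⟩ | ⟨hk, hlt⟩
      · have h := hrow x1; rw [if_pos hk] at h; exact h hlt
      · have h := hrow x1; rw [if_neg (Nat.not_lt.2 hk)] at h; exact h hlt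
    · cases h1
      rcases h2 with ⟨hk, hlt⟩ | ⟨hk, hlt⟩
      · have h := hcol x2; rw [if_pos hk] at h; exact h hlt
      · have h := hcol x2; rw [if_neg (Nat.not_lt.2 hk)] at h; exact h hlt
  · intro h
    constructor
    · intro i
      by_cases hi : i.val < k
      · rw [if_pos hi]; intro a b hab
        exact h (Or.inl ⟨rfl, Or.inl ⟨hi, hab⟩⟩)
      · rw [if_neg hi]; intro a b hab
        exact h (Or.inl ⟨rfl, Or.inr ⟨Nat.le_of_not_lt hi, hab⟩⟩)
    · intro j
      by_cases hj : j.val < ℓ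
      · rw [if_pos hj]; intro a b hab
        exact h (Or.inr ⟨rfl, Or.inl ⟨hj, hab⟩⟩)
      · rw [if_neg hj]; intro a b hab
        exact h (Or.inr ⟨rfl, Or.inr ⟨Nat.le_of_not_lt hj, hab⟩⟩)

lemma sep {n k ℓ N : ℕ} (g : Fin n × Fin n → Fin N) (hr : Respects (Rg n k ℓ) g)
    (x y : Fin n × Fin n)
    (hx : (x.1.val < k ∧ x.2.val < ℓ) ∨ (k ≤ x.1.val ∧ ℓ ≤ x.2.val))
    (hy : (y.1.val < k ∧ ℓ ≤ y.2.val) ∨ (k ≤ y.1.val ∧ y.2.val < ℓ)) :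
    g x < g y := by
  obtain ⟨x1, x2⟩ := x
  obtain ⟨y1, y2⟩ := y
  dsimp only at hx hy
  have rowe : ∀ (i a b : Fin n),
      (i.val < k ∧ a.val < b.val) ∨ (k ≤ i.val ∧ b.val < a.val) → g (i, a) < g (i, b) :=
    fun i a b h => hr (Or.inl ⟨rfl, h⟩)
  have cole : ∀ (j a b : Fin n),
      (j.val < ℓ ∧ a.val < b.val) ∨ (ℓ ≤ j.val ∧ b.val < a.val) → g (a, j) < g (b, j) :=
    fun j a b h => hr (Or.inr ⟨rfl, h⟩)
  rcases hx with ⟨hx1, hx2⟩ | ⟨hx1, hx2⟩ <;> rcases hy with ⟨hy1, hy2⟩ | ⟨hy1, hy2⟩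
  · rcases lt_trichotomy x1.val y1.val with h | h | h
    · exact lt_trans (cole x2 x1 y1 (Or.inl ⟨hx2, h⟩)) (rowe y1 x2 y2 (Or.inl ⟨hy1, by omega⟩))
    · rw [show x1 = y1 from Fin.ext h]
      exact rowe y1 x2 y2 (Or.inl ⟨hy1, by omega⟩)
    · exact lt_trans (rowe x1 x2 y2 (Or.inl ⟨hx1, by omega⟩)) (cole y2 x1 y1 (Or.inr ⟨hy2, h⟩))
  · rcases lt_trichotomy x2.val y2.val with h | h | h
    · exact lt_trans (rowe x1 x2 y2 (Or.inl ⟨hx1, h⟩)) (cole y2 x1 y1 (Or.inl ⟨hy2, by omega⟩))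
    · rw [show x2 = y2 from Fin.ext h]
      exact cole y2 x1 y1 (Or.inl ⟨hy2, by omega⟩)
    · exact lt_trans (cole x2 x1 y1 (Or.inl ⟨hx2, by omega⟩)) (rowe y1 x2 y2 (Or.inr ⟨hy1, h⟩))
  · rcases lt_trichotomy x2.val y2.val with h | h | h
    · exact lt_trans (cole x2 x1 y1 (Or.inr ⟨hx2, by omega⟩)) (rowe y1 x2 y2 (Or.inl ⟨hy1, h⟩))
    · rw [show x2 = y2 from Fin.ext h]
      exact cole y2 x1 y1 (Or.inr ⟨hy2, by omega⟩)
    · exact lt_trans (rowe x1 x2 y2 (Or.inr ⟨hx1, h⟩)) (cole y2 x1 y1 (Or.inr ⟨hy2, by omega⟩))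
  · rcases lt_trichotomy x1.val y1.val with h | h | h
    · exact lt_trans (rowe x1 x2 y2 (Or.inr ⟨hx1, by omega⟩)) (cole y2 x1 y1 (Or.inl ⟨hy2, h⟩))
    · rw [show x1 = y1 from Fin.ext h]
      exact rowe y1 x2 y2 (Or.inr ⟨hy1, by omega⟩)
    · exact lt_trans (cole x2 x1 y1 (Or.inr ⟨hx2, h⟩)) (rowe y1 x2 y2 (Or.inr ⟨hy1, by omega⟩))

def blockEquiv (n k ℓ : ℕ) (hk : k ≤ n) (hl : ℓ ≤ n) : (Fin n × Fin n) ≃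
    ((Fin k × Fin ℓ ⊕ Fin (n - k) × Fin (n - ℓ)) ⊕
     (Fin (n - k) × Fin ℓ ⊕ Fin k × Fin (n - ℓ))) where
  toFun x :=
    if h1 : x.1.val < k then
      if h2 : x.2.val < ℓ then .inl (.inl (⟨x.1.val, h1⟩, ⟨x.2.val, h2⟩))
      else .inr (.inr (⟨x.1.val, h1⟩, ⟨x.2.val - ℓ, by have := x.2.isLt; omega⟩))
    else
      if h2 : x.2.val < ℓ then
        .inr (.inl (⟨x.1.val - k, by have := x.1.isLt; omega⟩, ⟨x.2.val, h2⟩))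
      else .inl (.inr (⟨x.1.val - k, by have := x.1.isLt; omega⟩,
        ⟨x.2.val - ℓ, by have := x.2.isLt; omega⟩))
  invFun u :=
    match u with
    | .inl (.inl (i, j)) =>
        (⟨i.val, by have := i.isLt; omega⟩, ⟨j.val, by have := j.isLt; omega⟩)
    | .inl (.inr (i, j)) =>
        (⟨k + i.val, by have := i.isLt; omega⟩, ⟨ℓ + j.val, by have := j.isLt; omega⟩)
    | .inr (.inl (i, j)) =>
        (⟨k + i.val, by have := i.isLt; omega⟩, ⟨j.val, by have := j.isLt; omega⟩)
    | .inr (.inr (i, j)) =>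
        (⟨i.val, by have := i.isLt; omega⟩, ⟨ℓ + j.val, by have := j.isLt; omega⟩)
  left_inv := by
    rintro ⟨x1, x2⟩
    dsimp only
    by_cases h1 : x1.val < k <;> by_cases h2 : x2.val < ℓ
    · rw [dif_pos h1, dif_pos h2]
    · rw [dif_pos h1, dif_neg h2]
      exact Prod.ext (Fin.ext rfl) (Fin.ext (by simp; omega))
    · rw [dif_neg h1, dif_pos h2]
      exact Prod.ext (Fin.ext (by simp; omega)) (Fin.ext rfl)
    · rw [dif_neg h1, dif_neg h2]
      exact Prod.ext (Fin.ext (by simp; omega)) (Fin.ext (by simp; omega))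
  right_inv := by
    rintro ((⟨i, j⟩ | ⟨i, j⟩) | (⟨i, j⟩ | ⟨i, j⟩)) <;>
      · have hi := i.isLt; have hj := j.isLt
        dsimp only
        first
          | rw [dif_pos hi, dif_pos hj]
          | (rw [dif_neg (by omega), dif_neg (by omega)]
             refine congrArg _ (congrArg _ (Prod.ext (Fin.ext ?_) (Fin.ext ?_))) <;> simp <;> omega)
          | (rw [dif_neg (by omega), dif_pos hj]
             refine congrArg _ (congrArg _ (Prod.ext (Fin.ext ?_) (Fin.ext ?_))) <;> simp)
          | (rw [dif_pos hi, dif_neg (by omega)]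
             refine congrArg _ (congrArg _ (Prod.ext (Fin.ext ?_) (Fin.ext ?_))) <;> simp <;> omega)

end SMP

/-- The hook-length-formula count of the solutions of the puzzle with
parameters `k, ℓ`. -/
theorem count_solutions (n k ℓ : ℕ) (hk1 : 1 ≤ k) (hk2 : k ≤ n - 1)
    (hl1 : 1 ≤ ℓ) (hl2 : ℓ ≤ n - 1) :
    Nat.card {g : Fin n × Fin n → Fin (n ^ 2) //
        IsSolution n (fun i => decide (i.val < k)) (fun j => decide (j.val < ℓ)) g} =
      Nat.choose (k * ℓ + (n - k) * (n - ℓ)) (k * ℓ) *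
      Nat.choose (n ^ 2 - (k * ℓ + (n - k) * (n - ℓ))) ((n - k) * ℓ) *
      SYT k ℓ * SYT (n - k) (n - ℓ) * SYT k (n - ℓ) * SYT (n - k) ℓ := by
  have hn2 : 2 ≤ n := by omega
  have hkn : k ≤ n := by omega
  have hln : ℓ ≤ n := by omega
  set e := SMP.blockEquiv n k ℓ hkn hln with he
  set R4 := fun u v => SMP.Rg n k ℓ (e.symm u) (e.symm v) with hR4
  have hsq : n ^ 2 = (k * ℓ + (n - k) * (n - ℓ)) + ((n - k) * ℓ + k * (n - ℓ)) := by
    have h1 : n = k + (n - k) := by omega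
    have h2 : n = ℓ + (n - ℓ) := by omega
    calc n ^ 2 = n * n := sq n
      _ = (k + (n - k)) * (ℓ + (n - ℓ)) := by rw [← h1, ← h2]
      _ = _ := by ring
  have hMeq : (n - k) * ℓ + k * (n - ℓ) = n ^ 2 - (k * ℓ + (n - k) * (n - ℓ)) := by
    rw [hsq]
    exact (Nat.add_sub_cancel_left _ _).symm
  -- step 1 : to Respects form
  rw [Nat.card_congr (Equiv.subtypeEquivRight (SMP.sol_iff n k ℓ))]
  -- step 2 : relabel to the block sum type
  rw [SMP.card_relabel e (SMP.Rg n k ℓ) R4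
    (fun x y => by rw [hR4]; simp) (n ^ 2) (n ^ 2) rfl]
  -- step 3 : split into the low half (A ⊕ D) and the high half (C ⊕ B)
  have hcross : ∀ (x : Fin k × Fin ℓ ⊕ Fin (n - k) × Fin (n - ℓ))
      (y : Fin (n - k) × Fin ℓ ⊕ Fin k × Fin (n - ℓ)), ¬ R4 (inr y) (inl x) := by
    rintro (⟨a, b⟩ | ⟨a, b⟩) (⟨i, j⟩ | ⟨i, j⟩) h <;>
      · have := a.isLt; have := b.isLt; have := i.isLt; have := j.isLt
        rw [hR4] at h
        simp only [he, SMP.blockEquiv, Equiv.coe_fn_symm_mk, SMP.Rg, Fin.ext_iff] at h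
        omega
  have hsep : ∀ g : (Fin k × Fin ℓ ⊕ Fin (n - k) × Fin (n - ℓ)) ⊕
      (Fin (n - k) × Fin ℓ ⊕ Fin k × Fin (n - ℓ)) → Fin (n ^ 2),
      Function.Bijective g → SMP.Respects R4 g →
      ∀ x y, g (inl x) < g (inr y) := by
    intro g hb hr x y
    have hrg : SMP.Respects (SMP.Rg n k ℓ) (fun z => g (e z)) := by
      intro u v huv
      refine hr ?_
      rw [hR4]
      simpa using huv
    have h := SMP.sep (fun z => g (e z)) hrg (e.symm (inl x)) (e.symm (inr y)) ?_ ?_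
    · simpa using h
    · rcases x with ⟨i, j⟩ | ⟨i, j⟩ <;>
        · have := i.isLt; have := j.isLt
          simp only [he, SMP.blockEquiv, Equiv.coe_fn_symm_mk]
          omega
    · rcases y with ⟨i, j⟩ | ⟨i, j⟩ <;>
        · have := i.isLt; have := j.isLt
          simp only [he, SMP.blockEquiv, Equiv.coe_fn_symm_mk]
          omega
  rw [SMP.card_split R4 (n ^ 2) (k * ℓ + (n - k) * (n - ℓ)) (n ^ 2 - (k * ℓ + (n - k) * (n - ℓ)))
    (by simp) (by simpa using hMeq) (Nat.add_sub_cancel' (hsq ▸ Nat.le_add_right _ _)) hcross hsep]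
  -- step 4 : factor each half into its two blocks
  have hAD1 : ∀ (x : Fin k × Fin ℓ) (y : Fin (n - k) × Fin (n - ℓ)),
      ¬ R4 (inl (inl x)) (inl (inr y)) := by
    rintro ⟨a, b⟩ ⟨i, j⟩ h
    have := a.isLt; have := b.isLt; have := i.isLt; have := j.isLt
    rw [hR4] at h
    simp only [he, SMP.blockEquiv, Equiv.coe_fn_symm_mk, SMP.Rg, Fin.ext_iff] at h
    omega
  have hAD2 : ∀ (x : Fin k × Fin ℓ) (y : Fin (n - k) × Fin (n - ℓ)),
      ¬ R4 (inl (inr y)) (inl (inl x)) := by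
    rintro ⟨a, b⟩ ⟨i, j⟩ h
    have := a.isLt; have := b.isLt; have := i.isLt; have := j.isLt
    rw [hR4] at h
    simp only [he, SMP.blockEquiv, Equiv.coe_fn_symm_mk, SMP.Rg, Fin.ext_iff] at h
    omega
  have hCB1 : ∀ (x : Fin (n - k) × Fin ℓ) (y : Fin k × Fin (n - ℓ)),
      ¬ R4 (inr (inl x)) (inr (inr y)) := by
    rintro ⟨a, b⟩ ⟨i, j⟩ h
    have := a.isLt; have := b.isLt; have := i.isLt; have := j.isLt
    rw [hR4] at h
    simp only [he, SMP.blockEquiv, Equiv.coe_fn_symm_mk, SMP.Rg, Fin.ext_iff] at h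
    omega
  have hCB2 : ∀ (x : Fin (n - k) × Fin ℓ) (y : Fin k × Fin (n - ℓ)),
      ¬ R4 (inr (inr y)) (inr (inl x)) := by
    rintro ⟨a, b⟩ ⟨i, j⟩ h
    have := a.isLt; have := b.isLt; have := i.isLt; have := j.isLt
    rw [hR4] at h
    simp only [he, SMP.blockEquiv, Equiv.coe_fn_symm_mk, SMP.Rg, Fin.ext_iff] at h
    omega
  rw [SMP.card_product (fun a b => R4 (inl a) (inl b)) (k * ℓ) ((n - k) * (n - ℓ))
    (k * ℓ + (n - k) * (n - ℓ)) (by simp) (by simp) rfl hAD1 hAD2]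
  rw [SMP.card_product (fun a b => R4 (inr a) (inr b)) ((n - k) * ℓ) (k * (n - ℓ))
    (n ^ 2 - (k * ℓ + (n - k) * (n - ℓ))) (by simp) (by simp) hMeq hCB1 hCB2]
  -- step 5 : identify the four block counts with SYT numbers
  have eA : Nat.card {p : Fin k × Fin ℓ → Fin (k * ℓ) // Function.Bijective p ∧
      SMP.Respects (fun u v => R4 (inl (inl u)) (inl (inl v))) p} = SYT k ℓ := by
    rw [SMP.card_resp_congr
      (R' := fun x y : Fin k × Fin ℓ => (x.1 = y.1 ∧ x.2 < y.2) ∨ (x.2 = y.2 ∧ x.1 < y.1))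
      (fun x y => by
        obtain ⟨a, b⟩ := x; obtain ⟨c, d⟩ := y
        have := a.isLt; have := b.isLt; have := c.isLt; have := d.isLt
        rw [hR4]
        simp only [he, SMP.blockEquiv, Equiv.coe_fn_symm_mk, SMP.Rg, Fin.ext_iff, Fin.lt_def]
        omega) (k * ℓ)]
    exact SMP.SYT_eq_id k ℓ (k * ℓ) rfl
  have eD : Nat.card {p : Fin (n - k) × Fin (n - ℓ) → Fin ((n - k) * (n - ℓ)) //
      Function.Bijective p ∧
      SMP.Respects (fun u v => R4 (inl (inr u)) (inl (inr v))) p} = SYT (n - k) (n - ℓ) := by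
    rw [SMP.card_resp_congr
      (R' := fun x y : Fin (n - k) × Fin (n - ℓ) =>
        (x.1 = y.1 ∧ y.2 < x.2) ∨ (x.2 = y.2 ∧ y.1 < x.1))
      (fun x y => by
        obtain ⟨a, b⟩ := x; obtain ⟨c, d⟩ := y
        have := a.isLt; have := b.isLt; have := c.isLt; have := d.isLt
        rw [hR4]
        simp only [he, SMP.blockEquiv, Equiv.coe_fn_symm_mk, SMP.Rg, Fin.ext_iff, Fin.lt_def]
        omega) ((n - k) * (n - ℓ))]
    exact SMP.SYT_eq_rev_both (n - k) (n - ℓ) ((n - k) * (n - ℓ)) rfl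
  have eC : Nat.card {p : Fin (n - k) × Fin ℓ → Fin ((n - k) * ℓ) //
      Function.Bijective p ∧
      SMP.Respects (fun u v => R4 (inr (inl u)) (inr (inl v))) p} = SYT (n - k) ℓ := by
    rw [SMP.card_resp_congr
      (R' := fun x y : Fin (n - k) × Fin ℓ =>
        (x.1 = y.1 ∧ y.2 < x.2) ∨ (x.2 = y.2 ∧ x.1 < y.1))
      (fun x y => by
        obtain ⟨a, b⟩ := x; obtain ⟨c, d⟩ := y
        have := a.isLt; have := b.isLt; have := c.isLt; have := d.isLt
        rw [hR4]
        simp only [he, SMP.blockEquiv, Equiv.coe_fn_symm_mk, SMP.Rg, Fin.ext_iff, Fin.lt_def]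
        omega) ((n - k) * ℓ)]
    exact SMP.SYT_eq_rev_snd (n - k) ℓ ((n - k) * ℓ) rfl
  have eB : Nat.card {p : Fin k × Fin (n - ℓ) → Fin (k * (n - ℓ)) //
      Function.Bijective p ∧
      SMP.Respects (fun u v => R4 (inr (inr u)) (inr (inr v))) p} = SYT k (n - ℓ) := by
    rw [SMP.card_resp_congr
      (R' := fun x y : Fin k × Fin (n - ℓ) =>
        (x.1 = y.1 ∧ x.2 < y.2) ∨ (x.2 = y.2 ∧ y.1 < x.1))
      (fun x y => by
        obtain ⟨a, b⟩ := x; obtain ⟨c, d⟩ := y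
        have := a.isLt; have := b.isLt; have := c.isLt; have := d.isLt
        rw [hR4]
        simp only [he, SMP.blockEquiv, Equiv.coe_fn_symm_mk, SMP.Rg, Fin.ext_iff, Fin.lt_def]
        omega) (k * (n - ℓ))]
    exact SMP.SYT_eq_rev_fst k (n - ℓ) (k * (n - ℓ)) rfl
  rw [eA, eD, eC, eB]
  ring
end

section
/- The number of standard Young tableaux of rectangular shape a × b equals (ab)! · (∏_{i=0}^{a−1} i!) / (∏_{i=0}^{a−1} (b+i)!). -/
/-!
Recording, for each entry `0, …, ab - 1` of a standard tableau, the row containing it (rows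
numbered from the bottom) identifies rectangular tableaux with ballot words: words in which
every letter occurs `b` times and every prefix contains each letter at least as often as any
smaller letter. Let walker `i` start at height `σ i` and climb one step whenever letter `i` is
read. The configurations with final heights `b + i` in which no two walkers ever share a
height are exactly those with `σ = 1` and a ballot word. The Lindström–Gessel–Viennot
involution, which makes the first two walkers to meet exchange their histories, cancels all
colliding configurations in the signed count over all `σ`. For fixed `σ` the configurations
are counted by the multinomial coefficient `(ab)! / ∏ i, (b + i - σ i)!`, so the signed count
is `(ab)! / ∏ i, (b + i)!` times the determinant of descending factorials
`(b + i)(b + i - 1)⋯(b + i - j + 1)`. That is a Vandermonde determinant after a unitriangular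
change of polynomial basis, and it equals `∏ i < a, i!`.
-/

open Finset Equiv
open scoped Nat

namespace RectangularTableau

variable {n a : ℕ}

section PrefixCount

def prefixCount (w : Fin n → Fin a) (i : Fin a) (k : ℕ) : ℕ :=
  #{v : Fin n | (v : ℕ) < k ∧ w v = i}

variable (w : Fin n → Fin a) (i : Fin a)

@[simp]
lemma prefixCount_zero : prefixCount w i 0 = 0 := by simp [prefixCount]

lemma prefixCount_add {K k : ℕ} (hKk : K ≤ k) :
    prefixCount w i k =
      prefixCount w i K + #{v : Fin n | K ≤ (v : ℕ) ∧ (v : ℕ) < k ∧ w v = i} := by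
  rw [prefixCount, prefixCount, ← card_union_of_disjoint]
  · congr 1
    ext v
    simp only [mem_filter, mem_union, mem_univ, true_and]
    omega
  · rw [disjoint_left]
    intro v hv hv'
    simp only [mem_filter] at hv hv'
    omega

lemma prefixCount_mono : Monotone (prefixCount w i) := fun _ _ hkk' =>
  (prefixCount_add w i hkk').symm ▸ Nat.le_add_right _ _

lemma prefixCount_succ_le (k : ℕ) : prefixCount w i (k + 1) ≤ prefixCount w i k + 1 := by
  rw [prefixCount_add w i k.le_succ]
  refine Nat.add_le_add_left (card_le_one.2 fun u hu v hv => Fin.ext ?_) _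
  simp only [mem_filter] at hu hv
  omega

lemma prefixCount_length : prefixCount w i n = #{v : Fin n | w v = i} := by
  simp [prefixCount]

end PrefixCount

lemma pos_of_forall_ne_zero {d : ℕ → ℤ} (hstep : ∀ k, |d (k + 1) - d k| ≤ 1)
    (h0 : 0 < d 0) {m : ℕ} (hne : ∀ k ≤ m, d k ≠ 0) : 0 < d m := by
  induction m with
  | zero => exact h0
  | succ m ih =>
    have := abs_le.mp (hstep m)
    have := ih fun k hk => hne k (by omega)
    have := hne (m + 1) le_rfl
    omega

section Walkers

variable (σ : Perm (Fin a)) (w : Fin n → Fin a)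

def walker (k : ℕ) (i : Fin a) : ℕ := σ i + prefixCount w i k

lemma abs_walker_sub_walker_succ_sub_le (i j : Fin a) (k : ℕ) :
    |((walker σ w (k + 1) j : ℤ) - walker σ w (k + 1) i) -
      ((walker σ w k j : ℤ) - walker σ w k i)| ≤ 1 := by
  have := prefixCount_mono w i (Nat.le_add_right k 1)
  have := prefixCount_mono w j (Nat.le_add_right k 1)
  have := prefixCount_succ_le w i k
  have := prefixCount_succ_le w j k
  rw [abs_le]
  unfold walker
  push_cast
  omega

def HasCollisionAt (k : ℕ) : Prop := ∃ i j, i ≠ j ∧ walker σ w k i = walker σ w k j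

def HasCollision : Prop := ∃ k ≤ n, HasCollisionAt σ w k

variable {σ w}

lemma walker_lt_walker_of_not_hasCollision (h : ¬HasCollision σ w) {i j : Fin a}
    (hij : walker σ w 0 i < walker σ w 0 j) {k : ℕ} (hk : k ≤ n) :
    walker σ w k i < walker σ w k j := by
  have hne : i ≠ j := by rintro rfl; exact hij.false
  have := pos_of_forall_ne_zero (d := fun k => (walker σ w k j : ℤ) - walker σ w k i)
    (abs_walker_sub_walker_succ_sub_le σ w i j) (by simpa using hij) (m := k)
    fun k' hk' h0 => h ⟨k', hk'.trans hk, i, j, hne, by omega⟩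
  simpa using this

end Walkers

section SwapPrefix

variable (K : ℕ) (i j : Fin a) (σ : Perm (Fin a)) (w : Fin n → Fin a)

def swapPrefix : Fin n → Fin a := fun v => if (v : ℕ) < K then swap i j (w v) else w v

lemma swapPrefix_swapPrefix : swapPrefix K i j (swapPrefix K i j w) = w := by
  funext v
  unfold swapPrefix
  split_ifs <;> simp

variable {K} {k : ℕ} (l : Fin a)

lemma prefixCount_swapPrefix_of_le (hk : k ≤ K) :
    prefixCount (swapPrefix K i j w) l k = prefixCount w (swap i j l) k := by
  unfold prefixCount swapPrefix
  congr 1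
  refine filter_congr fun v _ => and_congr_right fun hv => ?_
  rw [if_pos (by omega), swap_apply_eq_iff]

lemma prefixCount_swapPrefix_of_ge (hk : K ≤ k) :
    prefixCount (swapPrefix K i j w) l k + prefixCount w l K =
      prefixCount w (swap i j l) K + prefixCount w l k := by
  have htail : #{v : Fin n | K ≤ (v : ℕ) ∧ (v : ℕ) < k ∧ swapPrefix K i j w v = l} =
      #{v : Fin n | K ≤ (v : ℕ) ∧ (v : ℕ) < k ∧ w v = l} := by
    congr 1
    refine filter_congr fun v _ => and_congr_right fun hv => ?_
    rw [swapPrefix, if_neg (by omega)]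
  rw [prefixCount_add _ _ hk, prefixCount_add w _ hk, htail,
    prefixCount_swapPrefix_of_le i j w l le_rfl]
  ring

lemma walker_swapPrefix_of_le (hk : k ≤ K) :
    walker (σ * swap i j) (swapPrefix K i j w) k l = walker σ w k (swap i j l) := by
  rw [walker, walker, prefixCount_swapPrefix_of_le i j w l hk, Equiv.Perm.mul_apply]

variable {i j σ w}

lemma walker_swapPrefix_of_ge (hcol : walker σ w K i = walker σ w K j) (hk : K ≤ k) :
    walker (σ * swap i j) (swapPrefix K i j w) k l = walker σ w k l := by
  have hK : walker σ w K (swap i j l) = walker σ w K l := by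
    rcases eq_or_ne l i with rfl | hli
    · simpa using hcol.symm
    rcases eq_or_ne l j with rfl | hlj
    · simpa using hcol
    rw [swap_apply_of_ne_of_ne hli hlj]
  have := prefixCount_swapPrefix_of_ge i j w l hk
  unfold walker at *
  rw [Equiv.Perm.mul_apply]
  omega

lemma hasCollisionAt_swapPrefix_iff (hcol : walker σ w K i = walker σ w K j) (k : ℕ) :
    HasCollisionAt (σ * swap i j) (swapPrefix K i j w) k ↔ HasCollisionAt σ w k := by
  rcases le_or_gt k K with hk | hk
  · simp only [HasCollisionAt, walker_swapPrefix_of_le _ _ _ _ _ hk]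
    exact (swap i j).exists_congr fun {_} =>
      (swap i j).exists_congr fun {_} => by simp
  · simp only [HasCollisionAt, walker_swapPrefix_of_ge _ hcol hk.le]

end SwapPrefix

section Reflection

variable {σ : Perm (Fin a)} {w : Fin n → Fin a} (h : HasCollision σ w)

open Classical in
noncomputable def firstCollision : ℕ := Nat.find h

lemma firstCollision_spec :
    firstCollision h ≤ n ∧ HasCollisionAt σ w (firstCollision h) := by
  classical exact Nat.find_spec h

variable (σ w) in
def collidingPairs (k : ℕ) : Finset (Fin a ×ₗ Fin a) :=
  {q | (ofLex q).1 ≠ (ofLex q).2 ∧ walker σ w k (ofLex q).1 = walker σ w k (ofLex q).2}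

lemma collidingPairs_nonempty {k : ℕ} (hk : HasCollisionAt σ w k) :
    (collidingPairs σ w k).Nonempty := by
  obtain ⟨i, j, hij, hw⟩ := hk
  exact ⟨toLex (i, j), by simp [collidingPairs, hij, hw]⟩

-- The pair is read off the walkers at the first collision time only, which `reflect` leaves
-- unchanged from that time on; this is what makes `reflect` an involution.
noncomputable def collisionPair : Fin a × Fin a :=
  ofLex ((collidingPairs σ w (firstCollision h)).min'
    (collidingPairs_nonempty (firstCollision_spec h).2))

lemma collisionPair_spec :
    (collisionPair h).1 ≠ (collisionPair h).2 ∧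
      walker σ w (firstCollision h) (collisionPair h).1 =
        walker σ w (firstCollision h) (collisionPair h).2 := by
  have := min'_mem _ (collidingPairs_nonempty (firstCollision_spec h).2)
  simp only [collidingPairs, mem_filter] at this
  exact this.2

noncomputable def reflect : Perm (Fin a) × (Fin n → Fin a) :=
  (σ * swap (collisionPair h).1 (collisionPair h).2,
    swapPrefix (firstCollision h) (collisionPair h).1 (collisionPair h).2 w)

lemma hasCollisionAt_reflect_iff (k : ℕ) :
    HasCollisionAt (reflect h).1 (reflect h).2 k ↔ HasCollisionAt σ w k :=
  hasCollisionAt_swapPrefix_iff (collisionPair_spec h).2 k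

lemma hasCollision_reflect : HasCollision (reflect h).1 (reflect h).2 :=
  ⟨_, (firstCollision_spec h).1, (hasCollisionAt_reflect_iff h _).2 (firstCollision_spec h).2⟩

lemma walker_reflect_of_ge {k : ℕ} (hk : firstCollision h ≤ k)
    (l : Fin a) : walker (reflect h).1 (reflect h).2 k l = walker σ w k l :=
  walker_swapPrefix_of_ge l (collisionPair_spec h).2 hk

lemma firstCollision_reflect (h' : HasCollision (reflect h).1 (reflect h).2) :
    firstCollision h' = firstCollision h := by
  classical
  exact Nat.find_congr' (and_congr_right' (hasCollisionAt_reflect_iff h _))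

lemma collisionPair_reflect (h' : HasCollision (reflect h).1 (reflect h).2) :
    collisionPair h' = collisionPair h := by
  have hpairs : collidingPairs (reflect h).1 (reflect h).2 (firstCollision h') =
      collidingPairs σ w (firstCollision h) := by
    simp only [collidingPairs, firstCollision_reflect h h', walker_reflect_of_ge h le_rfl]
  unfold collisionPair
  congr 2

lemma reflect_reflect (h' : HasCollision (reflect h).1 (reflect h).2) :
    reflect h' = (σ, w) := by
  rw [reflect, collisionPair_reflect h h', firstCollision_reflect h h']
  simp [reflect, mul_assoc, swapPrefix_swapPrefix]

lemma sign_reflect :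
    Perm.sign (reflect h).1 = -Perm.sign σ := by
  simp [reflect, Perm.sign_swap (collisionPair_spec h).1]

lemma reflect_ne : reflect h ≠ (σ, w) := by
  simp [reflect, swap_eq_one_iff, (collisionPair_spec h).1]

end Reflection

open Classical in
lemma sum_sign_eq_sum_sign_of_not_hasCollision (e : Fin a → ℕ) :
    ∑ p ∈ ({p | ∀ i, walker p.1 p.2 n i = e i} : Finset (Perm (Fin a) × (Fin n → Fin a))),
        (Perm.sign p.1 : ℤ) =
      ∑ p ∈ ({p | (∀ i, walker p.1 p.2 n i = e i) ∧ ¬HasCollision p.1 p.2} :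
        Finset (Perm (Fin a) × (Fin n → Fin a))), (Perm.sign p.1 : ℤ) := by
  rw [← sum_filter_add_sum_filter_not _ fun p => HasCollision p.1 p.2, filter_filter,
    filter_filter]
  refine (add_eq_right.2 ?_)
  refine sum_involution (fun p hp => reflect (mem_filter.1 hp).2.2) (fun p hp => ?_)
    (fun p hp _ => reflect_ne (mem_filter.1 hp).2.2) (fun p hp => ?_)
    (fun p hp => reflect_reflect _ _)
  · rw [sign_reflect]
    push_cast
    ring
  · obtain ⟨-, he, h⟩ := mem_filter.1 hp
    simp only [mem_filter, mem_univ, true_and]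
    exact ⟨fun i => (walker_reflect_of_ge h (firstCollision_spec h).1 i).trans (he i),
      hasCollision_reflect h⟩

def IsBallot (b : ℕ) (w : Fin n → Fin a) : Prop :=
  (∀ i, prefixCount w i n = b) ∧ ∀ k ≤ n, Monotone fun i => prefixCount w i k

instance (b : ℕ) : DecidablePred (IsBallot (n := n) (a := a) b) := fun _ => by
  unfold IsBallot Monotone; infer_instance

lemma walker_one (w : Fin n → Fin a) (k : ℕ) (i : Fin a) :
    walker 1 w k i = i + prefixCount w i k := rfl

lemma eq_one_and_isBallot_of_not_hasCollision {b : ℕ} {σ : Perm (Fin a)}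
    {w : Fin n → Fin a} (he : ∀ i, walker σ w n i = b + i) (h : ¬HasCollision σ w) :
    σ = 1 ∧ IsBallot b w := by
  have hσ : Monotone σ := fun i j hij => by
    by_contra! hlt
    have := walker_lt_walker_of_not_hasCollision h (i := j) (j := i) (by simpa [walker] using hlt)
      le_rfl
    rw [he, he] at this
    exact (Fin.lt_def.2 (by omega)).not_ge hij
  obtain rfl : σ = 1 := Equiv.ext (congrFun (hσ.strictMono_of_injective σ.injective).eq_id)
  refine ⟨rfl, fun i => by have := he i; rw [walker_one] at this; omega, fun k hk => ?_⟩
  obtain _ | a := a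
  · exact fun i => i.elim0
  refine Fin.monotone_iff_le_succ.2 fun i => ?_
  have := walker_lt_walker_of_not_hasCollision h (i := i.castSucc) (j := i.succ)
    (by simp [walker_one]) hk
  simp only [walker_one, Fin.val_castSucc, Fin.val_succ] at this
  omega

lemma not_hasCollision_of_isBallot {b : ℕ} {w : Fin n → Fin a} (hw : IsBallot b w) :
    ¬HasCollision 1 w := by
  rintro ⟨k, hk, i, j, hij, hcol⟩
  rw [walker_one, walker_one] at hcol
  rcases hij.lt_or_gt with hlt | hlt
  · have : prefixCount w i k ≤ prefixCount w j k := hw.2 k hk hlt.le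
    have : (i : ℕ) < j := hlt
    omega
  · have : prefixCount w j k ≤ prefixCount w i k := hw.2 k hk hlt.le
    have : (j : ℕ) < i := hlt
    omega

lemma card_isBallot_eq_sum_sign (b : ℕ) :
    (#{w : Fin n → Fin a | IsBallot b w} : ℤ) =
      ∑ p ∈ ({p | ∀ i, walker p.1 p.2 n i = b + i} :
        Finset (Perm (Fin a) × (Fin n → Fin a))), (Perm.sign p.1 : ℤ) := by
  classical
  rw [sum_sign_eq_sum_sign_of_not_hasCollision]
  have hgood : ({p | (∀ i, walker p.1 p.2 n i = b + i) ∧ ¬HasCollision p.1 p.2} :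
      Finset (Perm (Fin a) × (Fin n → Fin a))) =
      ({w | IsBallot b w} : Finset (Fin n → Fin a)).map
        (Function.Embedding.sectR 1 _) := by
    ext ⟨σ, w⟩
    simp only [mem_filter, mem_univ, true_and, mem_map, Function.Embedding.sectR_apply,
      Prod.mk.injEq]
    constructor
    · rintro ⟨he, h⟩
      obtain ⟨rfl, hw⟩ := eq_one_and_isBallot_of_not_hasCollision he h
      exact ⟨w, hw, rfl, rfl⟩
    · rintro ⟨w, hw, rfl, rfl⟩
      exact ⟨fun i => by rw [walker_one, hw.1, add_comm], not_hasCollision_of_isBallot hw⟩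
  simp [hgood]

section Multinomial

variable (m : Fin a → ℕ)

def equivSigmaFinEquiv :
    (Fin n ≃ Σ i, Fin (m i)) ≃ Σ w : Fin n → Fin a, Π i, {v // w v = i} ≃ Fin (m i) where
  toFun e := ⟨fun v => (e v).1, fun i =>
    (e.subtypeEquiv fun _ => Iff.rfl).trans (Equiv.sigmaSubtype i)⟩
  invFun p := (Equiv.sigmaFiberEquiv p.1).symm.trans (Equiv.sigmaCongrRight p.2)
  left_inv e := rfl
  right_inv := by
    rintro ⟨w, f⟩
    refine congrArg (Sigma.mk w) (funext fun i => Equiv.ext ?_)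
    rintro ⟨v, rfl⟩
    rfl

lemma card_words_mul_prod_factorial (hm : ∑ i, m i = n) :
    #{w : Fin n → Fin a | ∀ i, #{v | w v = i} = m i} * ∏ i, (m i)! = n ! := by
  classical
  have hcard (w : Fin n → Fin a) : Fintype.card (Π i, {v // w v = i} ≃ Fin (m i)) =
      if ∀ i, #{v | w v = i} = m i then ∏ i, (m i)! else 0 := by
    rw [Fintype.card_pi]
    split_ifs with hw
    · refine prod_congr rfl fun i _ => ?_
      rw [Fintype.card_equiv (Fintype.equivFinOfCardEq (by simp [Fintype.card_subtype, hw])),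
        Fintype.card_subtype, hw]
    · obtain ⟨i, hi⟩ := not_forall.1 hw
      refine prod_eq_zero (mem_univ i) (Fintype.card_eq_zero_iff.2 ⟨fun e => hi ?_⟩)
      simpa [Fintype.card_subtype] using Fintype.card_congr e
  have := Fintype.card_congr (equivSigmaFinEquiv (n := n) m)
  rw [Fintype.card_sigma, Fintype.card_equiv (finCongr (by simp [hm]) |>.trans
    finSigmaFinEquiv.symm)] at this
  simp_rw [hcard, sum_ite, sum_const_zero, add_zero, sum_const, smul_eq_mul] at this
  simpa using this.symm

end Multinomial

lemma card_walker_eq_add_mul_prod_factorial (b : ℕ) (σ : Perm (Fin a)) :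
    #{w : Fin (a * b) → Fin a | ∀ i, walker σ w (a * b) i = b + i} * ∏ i : Fin a, (b + i)! =
      (a * b)! * ∏ i : Fin a, (b + i).descFactorial (σ i) := by
  by_cases hσ : ∀ i : Fin a, (σ i : ℕ) ≤ b + i
  · set m : Fin a → ℕ := fun i => b + i - σ i
    have hwords : #{w : Fin (a * b) → Fin a | ∀ i, walker σ w (a * b) i = b + i} =
        #{w : Fin (a * b) → Fin a | ∀ i, #{v | w v = i} = m i} := by
      refine congrArg card (filter_congr fun w _ => forall_congr' fun i => ?_)
      have hmi : m i = b + i - σ i := rfl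
      rw [walker, prefixCount_length]
      have := hσ i
      omega
    have hm : ∑ i, m i = a * b := by
      have hσsum : ∑ i, (σ i : ℕ) = ∑ i : Fin a, (i : ℕ) := Equiv.sum_comp σ _
      have : ∑ i, m i + ∑ i, (σ i : ℕ) = ∑ i : Fin a, (b + i) := by
        rw [← sum_add_distrib]
        exact sum_congr rfl fun i _ => Nat.sub_add_cancel (hσ i)
      rw [sum_add_distrib, sum_const, card_univ, Fintype.card_fin, smul_eq_mul, hσsum] at this
      omega
    have hfact (i : Fin a) : (b + i)! = (m i)! * (b + i).descFactorial (σ i) :=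
      (Nat.factorial_mul_descFactorial (hσ i)).symm
    rw [hwords, prod_congr rfl fun i _ => hfact i, prod_mul_distrib, ← mul_assoc,
      card_words_mul_prod_factorial m hm]
  · obtain ⟨i, hi⟩ := not_forall.1 hσ
    have hempty : #{w : Fin (a * b) → Fin a | ∀ i, walker σ w (a * b) i = b + i} = 0 := by
      refine card_eq_zero.2 (filter_eq_empty_iff.2 fun w _ hw => ?_)
      have := hw i
      rw [walker] at this
      omega
    rw [hempty, zero_mul, prod_eq_zero (mem_univ i)
      (Nat.descFactorial_eq_zero_iff_lt.2 (show b + (i : ℕ) < σ i by omega)), mul_zero]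

lemma sum_sign_mul_prod_descFactorial (a b : ℕ) :
    ∑ σ : Perm (Fin a), (Perm.sign σ : ℤ) *
        ∏ i : Fin a, ((b + i).descFactorial (σ i) : ℤ) = ∏ i ∈ range a, (i ! : ℤ) := by
  have hdet : ∑ σ : Perm (Fin a), (Perm.sign σ : ℤ) *
        ∏ i : Fin a, ((b + i).descFactorial (σ i) : ℤ) =
      (Matrix.of fun i j : Fin a => (descPochhammer ℤ j).eval ((i : ℤ) + b)).det := by
    rw [← Matrix.det_transpose, Matrix.det_apply']
    refine sum_congr rfl fun σ _ => ?_
    simp [← descPochhammer_eval_eq_descFactorial, add_comm]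
  rw [hdet, ← Matrix.det_eval_matrixOfPolynomials_eq_det_vandermonde _ _
    (fun j => descPochhammer_natDegree ℤ _) (fun j => monic_descPochhammer ℤ _),
    Matrix.det_vandermonde_add]
  obtain _ | a := a
  · simp
  · rw [Matrix.det_vandermonde_id_eq_superFactorial, ← Nat.prod_range_succ_factorial]
    push_cast
    rfl

lemma card_isBallot_mul_prod_factorial (a b : ℕ) :
    #{w : Fin (a * b) → Fin a | IsBallot b w} * ∏ i : Fin a, (b + i)! =
      (a * b)! * ∏ i ∈ range a, i ! := by
  classical
  have hsum : ∑ p ∈ ({p | ∀ i, walker p.1 p.2 (a * b) i = b + i} :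
        Finset (Perm (Fin a) × (Fin (a * b) → Fin a))), (Perm.sign p.1 : ℤ) =
      ∑ σ : Perm (Fin a), (Perm.sign σ : ℤ) *
        #{w : Fin (a * b) → Fin a | ∀ i, walker σ w (a * b) i = b + i} := by
    rw [sum_filter, Fintype.sum_prod_type]
    refine sum_congr rfl fun σ _ => ?_
    simp only [sum_ite, sum_const_zero, add_zero, sum_const, nsmul_eq_mul, mul_comm]
  zify
  rw [card_isBallot_eq_sum_sign, hsum, sum_mul, ← sum_sign_mul_prod_descFactorial a b, mul_sum]
  refine sum_congr rfl fun σ _ => ?_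
  have := congrArg (Nat.cast : ℕ → ℤ) (card_walker_eq_add_mul_prod_factorial b σ)
  rw [Nat.cast_mul, Nat.cast_mul, Nat.cast_prod, Nat.cast_prod] at this
  rw [mul_assoc, this]
  ring

section OrderEmbOfFin

variable {α : Type*} [LinearOrder α] (s : Finset α) {k : ℕ} (h : #s = k)

lemma filter_le_orderEmbOfFin (j : Fin k) :
    {x ∈ s | x ≤ s.orderEmbOfFin h j} = (Iic j).map (s.orderEmbOfFin h).toEmbedding := by
  ext x
  simp only [mem_filter, mem_map, mem_Iic, RelEmbedding.coe_toEmbedding]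
  constructor
  · rintro ⟨hx, hxj⟩
    obtain ⟨j', rfl⟩ : x ∈ Set.range (s.orderEmbOfFin h) := by
      rwa [range_orderEmbOfFin]
    exact ⟨j', (s.orderEmbOfFin h).le_iff_le.1 hxj, rfl⟩
  · rintro ⟨j', hj', rfl⟩
    exact ⟨orderEmbOfFin_mem s h j', (s.orderEmbOfFin h).le_iff_le.2 hj'⟩

lemma card_filter_le_orderEmbOfFin (j : Fin k) :
    #{x ∈ s | x ≤ s.orderEmbOfFin h j} = j + 1 := by
  rw [filter_le_orderEmbOfFin, card_map, Fin.card_Iic]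

lemma orderEmbOfFin_le_of_lt_card_filter_le {j : Fin k} {u : α}
    (hu : (j : ℕ) < #{x ∈ s | x ≤ u}) : s.orderEmbOfFin h j ≤ u := by
  by_contra! hlt
  have : {x ∈ s | x ≤ u} ⊆ {x ∈ s | x ≤ s.orderEmbOfFin h j} \ {s.orderEmbOfFin h j} := by
    intro x hx
    simp only [mem_filter, mem_sdiff, mem_singleton] at hx ⊢
    exact ⟨⟨hx.1, hx.2.trans hlt.le⟩, (hx.2.trans_lt hlt).ne⟩
  have := card_le_card this
  rw [card_sdiff_of_subset (by simp [orderEmbOfFin_mem]), card_filter_le_orderEmbOfFin,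
    card_singleton] at this
  omega

end OrderEmbOfFin

section Tableau

variable {a b : ℕ}

def IsStandardTableau (T : Fin a × Fin b → Fin (a * b)) : Prop :=
  Function.Bijective T ∧ (∀ j, StrictMono fun i => T (i, j)) ∧
    ∀ i, StrictMono fun j => T (i, j)

-- Rows are numbered from the bottom so that column strictness becomes monotonicity of the
-- letter counts.
noncomputable def tableauWord (T : Fin a × Fin b → Fin (a * b)) (hT : Function.Bijective T) :
    Fin (a * b) → Fin a :=
  fun v => ((Equiv.ofBijective T hT).symm v).1.rev

lemma tableauWord_apply {T : Fin a × Fin b → Fin (a * b)} (hT : Function.Bijective T)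
    (p : Fin a × Fin b) : tableauWord T hT (T p) = p.1.rev := by
  rw [tableauWord, ← Equiv.ofBijective_apply T hT, Equiv.symm_apply_apply]

lemma prefixCount_tableauWord {T : Fin a × Fin b → Fin (a * b)} (hT : Function.Bijective T)
    (l : Fin a) (k : ℕ) :
    prefixCount (tableauWord T hT) l k = #{j | (T (l.rev, j) : ℕ) < k} := by
  have hinj : Function.Injective fun j => T (l.rev, j) := fun j j' h =>
    (Prod.ext_iff.1 (hT.1 h)).2
  rw [prefixCount, ← card_image_of_injective _ hinj]
  congr 1
  ext v
  obtain ⟨⟨i, j⟩, rfl⟩ := hT.2 v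
  simp only [mem_filter, mem_univ, true_and, mem_image, tableauWord_apply, hT.1.eq_iff,
    Prod.mk.injEq]
  constructor
  · rintro ⟨hk, rfl⟩
    exact ⟨j, by simpa using hk, by simp, rfl⟩
  · rintro ⟨j', hk, rfl, rfl⟩
    exact ⟨hk, by simp⟩

lemma isBallot_tableauWord {T : Fin a × Fin b → Fin (a * b)} (hT : IsStandardTableau T) :
    IsBallot b (tableauWord T hT.1) := by
  refine ⟨fun l => ?_, fun k _ l l' hll' => ?_⟩
  · rw [prefixCount_tableauWord, filter_true_of_mem fun j _ => (T (l.rev, j)).isLt]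
    simp
  · simp only [prefixCount_tableauWord]
    refine card_le_card fun j => ?_
    simp only [mem_filter, mem_univ, true_and]
    exact lt_of_le_of_lt ((hT.2.1 j).monotone (Fin.rev_le_rev.2 hll'))

variable {w : Fin (a * b) → Fin a}

variable (w) in
def wordRow (i : Fin a) : Finset (Fin (a * b)) := {v | w v = i.rev}

lemma card_wordRow (hw : IsBallot b w) (i : Fin a) : #(wordRow w i) = b := by
  rw [wordRow, ← prefixCount_length]
  exact hw.1 _

variable (w) in
lemma prefixCount_rev_succ (i : Fin a) (u : Fin (a * b)) :
    prefixCount w i.rev (u + 1) = #{v ∈ wordRow w i | v ≤ u} := by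
  rw [prefixCount, wordRow, filter_filter]
  congr 1
  refine filter_congr fun v _ => ?_
  rw [Fin.le_def]
  omega

noncomputable def ballotTableau (hw : IsBallot b w) : Fin a × Fin b → Fin (a * b) :=
  fun p => (wordRow w p.1).orderEmbOfFin (card_wordRow hw p.1) p.2

lemma apply_ballotTableau (hw : IsBallot b w) (p : Fin a × Fin b) :
    w (ballotTableau hw p) = p.1.rev :=
  (mem_filter.1 (orderEmbOfFin_mem _ (card_wordRow hw p.1) p.2)).2

lemma ballotTableau_lt_of_lt (hw : IsBallot b w) (j : Fin b) {i i' : Fin a} (hii' : i < i') :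
    ballotTableau hw (i, j) < ballotTableau hw (i', j) := by
  have hrow (i : Fin a) : #{v ∈ wordRow w i | v ≤ ballotTableau hw (i, j)} = j + 1 :=
    card_filter_le_orderEmbOfFin _ _ j
  have hcount : (j : ℕ) < #{v ∈ wordRow w i | v ≤ ballotTableau hw (i', j)} := by
    rw [← prefixCount_rev_succ]
    calc (j : ℕ) < prefixCount w i'.rev (ballotTableau hw (i', j) + 1) := by
          rw [prefixCount_rev_succ, hrow]
          omega
      _ ≤ prefixCount w i.rev (ballotTableau hw (i', j) + 1) :=
          hw.2 _ (ballotTableau hw (i', j)).isLt (Fin.rev_le_rev.2 hii'.le)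
  have hne : ballotTableau hw (i, j) ≠ ballotTableau hw (i', j) := fun h => hii'.ne <| by
    have := congrArg w h
    rwa [apply_ballotTableau hw, apply_ballotTableau hw, Fin.rev_inj] at this
  exact (orderEmbOfFin_le_of_lt_card_filter_le _ _ hcount).lt_of_ne hne

lemma isStandardTableau_ballotTableau (hw : IsBallot b w) :
    IsStandardTableau (ballotTableau hw) := by
  have hinj : Function.Injective (ballotTableau hw) := by
    rintro ⟨i, j⟩ ⟨i', j'⟩ h
    obtain rfl : i = i' := by
      have := congrArg w h
      rwa [apply_ballotTableau hw, apply_ballotTableau hw, Fin.rev_inj] at this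
    exact Prod.ext rfl ((orderEmbOfFin _ (card_wordRow hw i)).injective h)
  refine ⟨(Fintype.bijective_iff_injective_and_card _).2 ⟨hinj, by simp⟩,
    fun j _ _ => ballotTableau_lt_of_lt hw j,
    fun i => (orderEmbOfFin _ (card_wordRow hw i)).strictMono⟩

lemma ballotTableau_tableauWord {T : Fin a × Fin b → Fin (a * b)} (hT : IsStandardTableau T) :
    ballotTableau (isBallot_tableauWord hT) = T := by
  funext ⟨i, j⟩
  refine (congrFun (orderEmbOfFin_unique _ (fun j => ?_) (hT.2.2 i)) j).symm
  simp [wordRow, tableauWord_apply]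

lemma tableauWord_ballotTableau (hw : IsBallot b w) :
    tableauWord _ (isStandardTableau_ballotTableau hw).1 = w := by
  funext v
  obtain ⟨j, hj⟩ : v ∈ Set.range ((wordRow w (w v).rev).orderEmbOfFin
      (card_wordRow hw _)) := by
    simp [range_orderEmbOfFin, wordRow]
  change ballotTableau hw ((w v).rev, j) = v at hj
  rw [← hj, tableauWord_apply, Fin.rev_rev, hj]

variable (a b) in
noncomputable def standardTableauEquivBallot :
    {T : Fin a × Fin b → Fin (a * b) // IsStandardTableau T} ≃
      {w : Fin (a * b) → Fin a // IsBallot b w} where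
  toFun T := ⟨tableauWord T.1 T.2.1, isBallot_tableauWord T.2⟩
  invFun w := ⟨ballotTableau w.2, isStandardTableau_ballotTableau w.2⟩
  left_inv T := Subtype.ext (ballotTableau_tableauWord T.2)
  right_inv w := Subtype.ext (tableauWord_ballotTableau w.2)

lemma card_standardTableau (a b : ℕ) :
    Nat.card {T : Fin a × Fin b → Fin (a * b) // IsStandardTableau T} =
      #{w : Fin (a * b) → Fin a | IsBallot b w} := by
  rw [Nat.card_congr (standardTableauEquivBallot a b), Nat.card_eq_fintype_card,
    Fintype.card_subtype]

end Tableau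

end RectangularTableau

open RectangularTableau in
/-- The hook length formula for rectangular shapes: the number of standard Young
tableaux of shape `a × b` satisfies
`#SYT(a,b) · ∏_{i<a} (b+i)! = (ab)! · ∏_{i<a} i!`. -/
theorem hook_length_formula_rectangular (a b : ℕ) :
    Nat.card {T : Fin a × Fin b → Fin (a * b) //
        Function.Bijective T ∧
        (∀ j : Fin b, StrictMono (fun i => T (i, j))) ∧
        (∀ i : Fin a, StrictMono (fun j => T (i, j)))} *
      (∏ i ∈ Finset.range a, (b + i).factorial) =
      (a * b).factorial * ∏ i ∈ Finset.range a, i.factorial := by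
  have := card_isBallot_mul_prod_factorial a b
  rw [← card_standardTableau, Fin.prod_univ_eq_prod_range (fun i => (b + i)!)] at this
  exact this
end

section
/- For n ≥ 2, the sorting match puzzle with all rows labeled A and columns labeled alternately A, D, A, D, … has exactly one solution, namely the boustrophedon (snake) filling in which column j (0-indexed) contains the values jn+1, …, (j+1)n, placed top-to-bottom when the column label is A and bottom-to-top when it is D. -/
/-- The boustrophedon (snake) filling for all-ascending rows and alternating
columns: column `j` holds values `jn, …, jn + n - 1` (0-indexed), top-to-bottom
when `j` is even and bottom-to-top when `j` is odd. -/
def snake (n : ℕ) (hn : 2 ≤ n) (p : Fin n × Fin n) : Fin (n ^ 2) :=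
  ⟨p.2.val * n + (if p.2.val % 2 = 0 then p.1.val else n - 1 - p.1.val), by
    have h1 := p.1.isLt
    have h2 := p.2.isLt
    have h3 : (p.2.val + 1) * n ≤ n * n := Nat.mul_le_mul_right n h2
    have h4 : n ^ 2 = n * n := sq n
    have h5 : (p.2.val + 1) * n = p.2.val * n + n := by ring
    split <;> omega⟩

/-- The inverse of the snake filling. -/
def snakeInv (n : ℕ) (hn : 2 ≤ n) (k : Fin (n ^ 2)) : Fin n × Fin n :=
  (⟨if (k.val / n) % 2 = 0 then k.val % n else n - 1 - k.val % n, by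
      have h1 : k.val % n < n := Nat.mod_lt _ (by omega)
      split <;> omega⟩,
   ⟨k.val / n, by
      have h1 := k.isLt
      have h4 : n ^ 2 = n * n := sq n
      exact Nat.div_lt_of_lt_mul (by omega)⟩)

theorem snake_snakeInv (n : ℕ) (hn : 2 ≤ n) (k : Fin (n ^ 2)) :
    snake n hn (snakeInv n hn k) = k := by
  have h1 : k.val % n < n := Nat.mod_lt _ (by omega)
  have h2 := Nat.div_add_mod' k.val n
  apply Fin.ext
  simp only [snake, snakeInv]
  split <;> omega

theorem snakeInv_snake (n : ℕ) (hn : 2 ≤ n) (p : Fin n × Fin n) :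
    snakeInv n hn (snake n hn p) = p := by
  have h1 := p.1.isLt
  have hoff : (if p.2.val % 2 = 0 then p.1.val else n - 1 - p.1.val) < n := by split <;> omega
  have hd : (p.2.val * n + (if p.2.val % 2 = 0 then p.1.val else n - 1 - p.1.val)) / n
      = p.2.val := by
    rw [Nat.mul_comm, Nat.mul_add_div (by omega), Nat.div_eq_of_lt hoff, Nat.add_zero]
  have hm : (p.2.val * n + (if p.2.val % 2 = 0 then p.1.val else n - 1 - p.1.val)) % n
      = (if p.2.val % 2 = 0 then p.1.val else n - 1 - p.1.val) := by
    rw [Nat.mul_comm, Nat.mul_add_mod, Nat.mod_eq_of_lt hoff]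
  ext
  · simp only [snakeInv, snake, hd, hm]
    split <;> omega
  · simp only [snakeInv, snake, hd]

/-- Consecutive (in snake order) cells are increasingly filled by any solution. -/
theorem step_lemma (n : ℕ) (hn : 2 ≤ n) (g : Fin n × Fin n → Fin (n ^ 2))
    (hg : IsSolution n (fun _ => true) (fun j => decide (j.val % 2 = 0)) g)
    (p q : Fin n × Fin n) (hpq : (snake n hn p).val + 1 = (snake n hn q).val) :
    g p < g q := by
  obtain ⟨-, hrow, hcol⟩ := hg
  obtain ⟨pi, pj⟩ := p
  obtain ⟨qi, qj⟩ := q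
  have hpi := pi.isLt
  have hqi := qi.isLt
  have hpj := pj.isLt
  have hqj := qj.isLt
  simp only [snake] at hpq
  rcases lt_trichotomy pj.val qj.val with hlt | heq | hgt
  · -- column change: must be qj = pj + 1, p at end of column pj, q at start of column qj
    have h1 : (pj.val + 1) * n ≤ qj.val * n := Nat.mul_le_mul_right n hlt
    have hq1 : qj.val = pj.val + 1 := by
      by_contra hne
      have h2 : (pj.val + 2) * n ≤ qj.val * n := Nat.mul_le_mul_right n (by omega)
      have h3 : (pj.val + 2) * n = pj.val * n + 2 * n := by ring
      have hb1 : (if pj.val % 2 = 0 then pi.val else n - 1 - pi.val) < n := by split <;> omega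
      omega
    have h3 : qj.val * n = pj.val * n + n := by rw [hq1]; ring
    have hb1 : (if pj.val % 2 = 0 then pi.val else n - 1 - pi.val) < n := by split <;> omega
    have hoffp : (if pj.val % 2 = 0 then pi.val else n - 1 - pi.val) = n - 1 := by omega
    have hoffq : (if qj.val % 2 = 0 then qi.val else n - 1 - qi.val) = 0 := by omega
    have hrows : pi = qi := by
      apply Fin.ext
      rcases Nat.even_or_odd pj.val with he | ho
      · have he' : pj.val % 2 = 0 := Nat.even_iff.mp he
        have ho' : qj.val % 2 = 1 := by omega
        rw [if_pos he'] at hoffp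
        rw [if_neg (by omega)] at hoffq
        omega
      · have ho' : pj.val % 2 = 1 := Nat.odd_iff.mp ho
        have he' : qj.val % 2 = 0 := by omega
        rw [if_neg (by omega)] at hoffp
        rw [if_pos he'] at hoffq
        omega
    have := hrow pi
    simp only [if_pos rfl] at this
    rw [← hrows]
    exact this (show pj < qj from hlt)
  · -- same column
    have hj : pj = qj := Fin.ext heq
    rcases Nat.even_or_odd pj.val with he | ho
    · have he' : pj.val % 2 = 0 := Nat.even_iff.mp he
      rw [if_pos he'] at hpq
      rw [heq, if_pos (heq ▸ he')] at hpq
      have hc := hcol pj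
      rw [if_pos (by simp [he'])] at hc
      rw [hj] at hc ⊢
      exact hc (show pi < qi by omega)
    · have ho' : pj.val % 2 = 1 := Nat.odd_iff.mp ho
      rw [if_neg (by omega)] at hpq
      rw [heq, if_neg (by omega)] at hpq
      have hc := hcol pj
      rw [if_neg (by simp [ho'])] at hc
      rw [hj] at hc ⊢
      exact hc (show qi < pi by omega)
  · -- impossible
    exfalso
    have h1 : (qj.val + 1) * n ≤ pj.val * n := Nat.mul_le_mul_right n hgt
    have h3 : (qj.val + 1) * n = qj.val * n + n := by ring
    have hb1 : (if qj.val % 2 = 0 then qi.val else n - 1 - qi.val) < n := by split <;> omega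
    omega

/-- With all rows labeled A and alternating column labels `A, D, A, D, …`, the
snake filling is the unique solution. -/
theorem boustrophedon_unique (n : ℕ) (hn : 2 ≤ n) :
    IsSolution n (fun _ => true) (fun j => decide (j.val % 2 = 0)) (snake n hn) ∧
    ∀ g : Fin n × Fin n → Fin (n ^ 2),
      IsSolution n (fun _ => true) (fun j => decide (j.val % 2 = 0)) g →
      g = snake n hn := by
  constructor
  · refine ⟨⟨?_, ?_⟩, ?_, ?_⟩
    · intro p q h
      have := congrArg (snakeInv n hn) h
      rwa [snakeInv_snake, snakeInv_snake] at this
    · intro k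
      exact ⟨snakeInv n hn k, snake_snakeInv n hn k⟩
    · intro i
      simp only [if_pos rfl]
      intro j1 j2 hlt
      rw [Fin.lt_def]
      simp only [snake]
      have h1 : (j1.val + 1) * n ≤ j2.val * n := Nat.mul_le_mul_right n hlt
      have h2 : (j1.val + 1) * n = j1.val * n + n := by ring
      have hi := i.isLt
      split <;> split <;> omega
    · intro j
      by_cases hj : j.val % 2 = 0
      · rw [if_pos (by simp [hj])]
        intro i1 i2 hlt
        rw [Fin.lt_def]
        simp only [snake, if_pos hj]
        exact Nat.add_lt_add_left hlt _
      · rw [if_neg (by simp [hj])]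
        intro i1 i2 hlt
        rw [Fin.lt_def]
        simp only [snake, if_neg hj]
        have h1 := i1.isLt
        have h2 := i2.isLt
        have : (i1 : ℕ) < i2 := hlt
        omega
  · intro g hg
    have gsurj := hg.1.2
    set h : Fin (n ^ 2) → Fin (n ^ 2) := fun k => g (snakeInv n hn k) with hh
    have step : ∀ (k : ℕ) (hk' : k < n ^ 2) (hk : k + 1 < n ^ 2),
        h ⟨k, hk'⟩ < h ⟨k + 1, hk⟩ := by
      intro k hk' hk
      apply step_lemma n hn g hg
      rw [snake_snakeInv, snake_snakeInv]
    have key : ∀ (d : ℕ) (a : Fin (n ^ 2)) (hb : a.val + 1 + d < n ^ 2),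
        h a < h ⟨a.val + 1 + d, hb⟩ := by
      intro d
      induction d with
      | zero =>
        intro a hb
        exact step a.val a.isLt hb
      | succ d ih =>
        intro a hb
        have hb' : a.val + 1 + d < n ^ 2 := by omega
        exact lt_trans (ih a hb') (step (a.val + 1 + d) hb' hb)
    have hmono : StrictMono h := by
      intro a b hab
      have hab' : a.val < b.val := hab
      have hbl := b.isLt
      have hb2 : b = ⟨a.val + 1 + (b.val - a.val - 1), by omega⟩ :=
        Fin.ext (show b.val = a.val + 1 + (b.val - a.val - 1) by omega)
      rw [hb2]
      exact key _ a _
    have hsurj : Function.Surjective h := by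
      intro y
      obtain ⟨p, hp⟩ := gsurj y
      exact ⟨snake n hn p, by simp only [hh, snakeInv_snake, hp]⟩
    haveI : WellFoundedLT (Fin (n ^ 2)) := Finite.to_wellFoundedLT
    have hid : h = id := by
      refine (hmono.range_inj strictMono_id).1 ?_
      rw [Set.range_id, hsurj.range_eq]
    funext p
    have := congrFun hid (snake n hn p)
    simpa [hh, snakeInv_snake] using this
end

section
/- For n ≥ 2, if a sorting match puzzle has all rows labeled A and there exist two adjacent columns j, j+1 bearing the same label, and the puzzle is solvable, then it has at least two distinct solutions. -/
lemma div_eq_of'' (a n k : ℕ) (h1 : k * n ≤ a) (h2 : a < k * n + n) : a / n = k :=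
  Nat.div_eq_of_lt_le h1 (by rw [Nat.succ_mul]; omega)

lemma div_facts' (a n k : ℕ) (hn : 0 < n) (h : a / n = k) : k * n ≤ a ∧ a < k * n + n := by
  subst h
  have h1 := Nat.div_add_mod a n
  have h2 := Nat.mod_lt a hn
  exact ⟨Nat.div_mul_le_self a n, by nlinarith⟩

lemma block_div (K t n : ℕ) (ht : t < n) : (K * n + t) / n = K :=
  div_eq_of'' _ _ _ (Nat.le_add_right _ _) (Nat.add_lt_add_left ht _)

lemma pred_div_ne (m n : ℕ) (hn : 0 < n) (h : m % n ≠ 0) : (m - 1) / n = m / n := by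
  obtain ⟨K, hK⟩ : ∃ K, m / n = K := ⟨_, rfl⟩
  obtain ⟨R, hR⟩ : ∃ R, m % n = R := ⟨_, rfl⟩
  have h1 : K * n + R = m := by rw [← hK, ← hR]; exact Nat.div_add_mod' m n
  have h2 : R < n := hR ▸ Nat.mod_lt m hn
  rw [hR] at h
  obtain ⟨B, hB⟩ : ∃ B, K * n = B := ⟨_, rfl⟩
  rw [hB] at h1
  rw [hK]
  apply div_eq_of'' <;> rw [hB] <;> omega

lemma pred_div_eq (m n : ℕ) (hn : 0 < n) (hm : 0 < m) (h : m % n = 0) :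
    (m - 1) / n = m / n - 1 ∧ 1 ≤ m / n ∧ m = m / n * n := by
  obtain ⟨K, hK⟩ : ∃ K, m / n = K := ⟨_, rfl⟩
  have h1 : K * n + 0 = m := by rw [← hK, ← h]; exact Nat.div_add_mod' m n
  obtain ⟨B, hB⟩ : ∃ B, K * n = B := ⟨_, rfl⟩
  rw [hB] at h1
  have hK1 : 1 ≤ K := by
    rcases Nat.eq_zero_or_pos K with h0 | h0
    · rw [h0] at hB; simp at hB; omega
    · exact h0
  have hA : (K - 1) * n + n = B := by
    rw [← hB]
    have h' : K - 1 + 1 = K := by omega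
    calc (K - 1) * n + n = (K - 1 + 1) * n := by ring
      _ = K * n := by rw [h']
  refine ⟨?_, hK ▸ hK1, by rw [hK, hB]; omega⟩
  rw [hK]
  obtain ⟨A, hA'⟩ : ∃ A, (K - 1) * n = A := ⟨_, rfl⟩
  rw [hA'] at hA
  apply div_eq_of'' <;> rw [hA'] <;> omega

lemma swap_pair_lt {N : ℕ} (v w a b : Fin N) (hvw : (w : ℕ) = (v : ℕ) + 1) (hab : a < b)
    (hne : ¬(a = v ∧ b = w)) : Equiv.swap v w a < Equiv.swap v w b := by
  simp only [Equiv.swap_apply_def]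
  rw [Fin.lt_def] at *
  split_ifs <;> simp_all [Fin.ext_iff] <;> omega

/-- If all rows are ascending and two adjacent columns carry the same label,
then a solvable puzzle has at least two distinct solutions. -/
theorem two_solutions_of_adjacent_equal (n : ℕ) (hn : 2 ≤ n) (c : Fin n → Bool)
    (j : Fin n) (hj : j.val + 1 < n) (hsame : c j = c ⟨j.val + 1, hj⟩)
    (hsolv : Solvable n (fun _ => true) c) :
    ∃ g₁ g₂ : Fin n × Fin n → Fin (n ^ 2),
      IsSolution n (fun _ => true) c g₁ ∧ IsSolution n (fun _ => true) c g₂ ∧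
      g₁ ≠ g₂ := by
  obtain ⟨g, hbij, hrow, hcol⟩ := hsolv
  set e : (Fin n × Fin n) ≃ Fin (n ^ 2) := Equiv.ofBijective g hbij with he
  have hge : ∀ p, e p = g p := fun _ => rfl
  have hgs : ∀ v, g (e.symm v) = v := fun v => e.apply_symm_apply v
  have hsg : ∀ p, e.symm (g p) = p := fun p => e.symm_apply_apply p
  have hrowM : ∀ i : Fin n, StrictMono fun k => g (i, k) := by
    intro i; have := hrow i; simpa using this
  by_cases key : ∃ v w : Fin (n ^ 2), (w : ℕ) = (v : ℕ) + 1 ∧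
      (e.symm v).1 ≠ (e.symm w).1 ∧ (e.symm v).2 ≠ (e.symm w).2
  · obtain ⟨v, w, hvw, hr, hc⟩ := key
    refine ⟨g, fun p => Equiv.swap v w (g p), ⟨hbij, hrow, hcol⟩, ⟨?_, ?_, ?_⟩, ?_⟩
    · exact (Equiv.swap v w).bijective.comp hbij
    · intro i
      simp only [if_pos rfl]
      intro k1 k2 hk
      refine swap_pair_lt v w _ _ hvw (hrowM i hk) ?_
      rintro ⟨h1, h2⟩
      apply hr
      have e1 : e.symm v = (i, k1) := by rw [← h1, hsg]
      have e2 : e.symm w = (i, k2) := by rw [← h2, hsg]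
      rw [e1, e2]
    · intro k
      have := hcol k
      by_cases hck : c k = true
      · rw [if_pos hck] at this ⊢
        intro i1 i2 hi
        refine swap_pair_lt v w _ _ hvw (this hi) ?_
        rintro ⟨h1, h2⟩
        apply hc
        have e1 : e.symm v = (i1, k) := by rw [← h1, hsg]
        have e2 : e.symm w = (i2, k) := by rw [← h2, hsg]
        rw [e1, e2]
      · rw [if_neg hck] at this ⊢
        intro i1 i2 hi
        refine swap_pair_lt v w _ _ hvw (this hi) ?_
        rintro ⟨h1, h2⟩
        apply hc
        have e1 : e.symm v = (i2, k) := by rw [← h1, hsg]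
        have e2 : e.symm w = (i1, k) := by rw [← h2, hsg]
        rw [e1, e2]
    · intro heq
      have := congrFun heq (e.symm v)
      rw [hgs, Equiv.swap_apply_left] at this
      exact absurd (Fin.ext_iff.mp this.symm) (by omega)
  · exfalso
    have hn0 : 0 < n := by omega
    have hnn : n * n = n ^ 2 := (pow_two n).symm
    have key' : ∀ v w : Fin (n ^ 2), (w : ℕ) = (v : ℕ) + 1 →
        (e.symm v).1 = (e.symm w).1 ∨ (e.symm v).2 = (e.symm w).2 := by
      intro v w h
      by_cases hr : (e.symm v).1 = (e.symm w).1
      · exact Or.inl hr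
      · by_cases hc2 : (e.symm v).2 = (e.symm w).2
        · exact Or.inr hc2
        · exact absurd ⟨v, w, h, hr, hc2⟩ key
    have hcolT : ∀ k, c k = true → StrictMono fun i => g (i, k) := by
      intro k hk; have := hcol k; rwa [if_pos hk] at this
    have hcolF : ∀ k, c k = false → StrictAnti fun i => g (i, k) := by
      intro k hk; have := hcol k; rwa [if_neg (by simp [hk])] at this
    -- every value sits in a determined column
    have Col : ∀ m : ℕ, ∀ hm : m < n ^ 2, ((e.symm ⟨m, hm⟩).2 : ℕ) = m / n := by
      intro m
      induction m using Nat.strong_induction_on with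
      | _ m IH =>
      intro hm
      obtain ⟨iv, kv, hv⟩ : ∃ a b, e.symm (⟨m, hm⟩ : Fin (n ^ 2)) = (a, b) :=
        ⟨_, _, rfl⟩
      rw [hv]
      show (kv : ℕ) = m / n
      have hgv : g (iv, kv) = ⟨m, hm⟩ := by rw [← hv]; exact hgs _
      rcases Nat.eq_zero_or_pos m with rfl | hm0
      · rw [Nat.zero_div]
        by_contra hne
        have h0 : (⟨0, hn0⟩ : Fin n) < kv := by
          rw [Fin.lt_def]
          exact Nat.pos_of_ne_zero hne
        have hlt : g (iv, ⟨0, hn0⟩) < g (iv, kv) := hrowM iv h0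
        rw [hgv] at hlt
        have h3 : (g (iv, ⟨0, hn0⟩) : ℕ) < 0 := Fin.lt_def.mp hlt
        omega
      · -- m > 0
        have hm1 : m - 1 < n ^ 2 := by omega
        obtain ⟨iw, kw, hw⟩ : ∃ a b, e.symm (⟨m - 1, hm1⟩ : Fin (n ^ 2)) = (a, b) :=
          ⟨_, _, rfl⟩
        have hgw : g (iw, kw) = ⟨m - 1, hm1⟩ := by rw [← hw]; exact hgs _
        have hwv : ((⟨m, hm⟩ : Fin (n ^ 2)) : ℕ) = ((⟨m - 1, hm1⟩ : Fin (n ^ 2)) : ℕ) + 1 := by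
          show m = m - 1 + 1; omega
        have hIHw : (kw : ℕ) = (m - 1) / n := by
          have h1 := IH (m - 1) (by omega) hm1
          rw [hw] at h1
          exact h1
        have hK := key' ⟨m - 1, hm1⟩ ⟨m, hm⟩ hwv
        rw [hw, hv] at hK
        -- the (m/n - 1) block is full of smaller values: no value ≥ m can sit in that column
        have fullblock : 1 ≤ m / n → ∀ q : Fin n × Fin n, m ≤ (g q : ℕ) →
            ((q.2 : ℕ) = m / n - 1) → False := by
          intro hK1 q hmx hcolx
          have hblk : ∀ t : ℕ, t < n → (m / n - 1) * n + t < m := by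
            intro t ht
            have h1 := (div_facts' m n (m / n) hn0 rfl).1
            have harr : (m / n - 1) * n + n = (m / n) * n := by
              have h' : m / n - 1 + 1 = m / n := by omega
              calc (m / n - 1) * n + n = (m / n - 1 + 1) * n := by ring
                _ = (m / n) * n := by rw [h']
            omega
          have hblk2 : ∀ t : Fin n, (m / n - 1) * n + (t : ℕ) < n ^ 2 := by
            intro t
            have := hblk t.val t.isLt
            omega
          set ψ : Fin n → Fin n × Fin n :=
            fun t => e.symm ⟨(m / n - 1) * n + (t : ℕ), hblk2 t⟩ with hψ
          have hcols : ∀ t : Fin n, ((ψ t).2 : ℕ) = m / n - 1 := by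
            intro t
            have h1 := IH ((m / n - 1) * n + (t : ℕ)) (hblk t.val t.isLt) (hblk2 t)
            rw [block_div _ _ _ t.isLt] at h1
            exact h1
          have hinj : Function.Injective fun t => (ψ t).1 := by
            intro t1 t2 h12
            have h2 : (ψ t1).2 = (ψ t2).2 := Fin.ext (by rw [hcols t1, hcols t2])
            have h3 : ψ t1 = ψ t2 := Prod.ext h12 h2
            have h4 := e.symm.injective h3
            have h5 : (m / n - 1) * n + (t1 : ℕ) = (m / n - 1) * n + (t2 : ℕ) :=
              Fin.ext_iff.mp h4
            exact Fin.ext (Nat.add_left_cancel h5)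
          obtain ⟨t, ht⟩ := Finite.surjective_of_injective hinj q.1
          have hqs : e.symm (g q) = q := hsg q
          have h2 : (ψ t).2 = q.2 := Fin.ext (by rw [hcols t, hcolx])
          have h3 : ψ t = q := Prod.ext ht h2
          have h4 : (⟨(m / n - 1) * n + (t : ℕ), hblk2 t⟩ : Fin (n ^ 2)) = g q := by
            have := congrArg e h3
            rw [e.apply_symm_apply] at this
            rw [this]
            exact (hge q).symm
          have h5 : (m / n - 1) * n + (t : ℕ) = (g q : ℕ) := Fin.ext_iff.mp h4
          have := hblk t.val t.isLt
          omega
        by_cases hmod : m % n = 0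
        · -- block boundary
          obtain ⟨hpred, hK1, hmeq⟩ := pred_div_eq m n hn0 hm0 hmod
          rcases hK with hre | hce
          · -- same row: the value m starts the next column
            have hre' : iw = iv := hre
            have hgw' : g (iv, kw) = ⟨m - 1, hm1⟩ := by rw [← hre']; exact hgw
            have hlt : kw < kv := by
              apply (hrowM iv).lt_iff_lt.mp
              show g (iv, kw) < g (iv, kv)
              rw [hgw', hgv]
              exact Fin.mk_lt_mk.mpr (by omega)
            have hlt' := Fin.lt_def.mp hlt
            have hstep : (kv : ℕ) ≤ (kw : ℕ) + 1 := by
              by_contra hgt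
              push_neg at hgt
              obtain ⟨mid, hmid⟩ : ∃ t : Fin n, (t : ℕ) = (kw : ℕ) + 1 :=
                ⟨⟨(kw : ℕ) + 1, by have := kv.isLt; omega⟩, rfl⟩
              have l1 : g (iv, kw) < g (iv, mid) := hrowM iv (Fin.lt_def.mpr (by omega))
              have l2 : g (iv, mid) < g (iv, kv) := hrowM iv (Fin.lt_def.mpr (by omega))
              rw [hgw'] at l1
              rw [hgv] at l2
              have l1' : m - 1 < (g (iv, mid) : ℕ) := Fin.lt_def.mp l1
              have l2' : (g (iv, mid) : ℕ) < m := Fin.lt_def.mp l2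
              omega
            rw [hIHw, hpred] at hlt' hstep
            omega
          · -- same column: impossible, that column is already full
            have hce' : kw = kv := hce
            exfalso
            refine fullblock hK1 (iv, kv) ?_ ?_
            · rw [hgv]
            · show (kv : ℕ) = m / n - 1
              rw [← hce', hIHw, hpred]
        · -- m % n ≠ 0
          have hpred := pred_div_ne m n hn0 hmod
          rcases hK with hre | hce
          · -- same row: leads to a contradiction
            exfalso
            have hre' : iw = iv := hre
            have hgw' : g (iv, kw) = ⟨m - 1, hm1⟩ := by rw [← hre']; exact hgw
            have hlt : kw < kv := by
              apply (hrowM iv).lt_iff_lt.mp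
              show g (iv, kw) < g (iv, kv)
              rw [hgw', hgv]
              exact Fin.mk_lt_mk.mpr (by omega)
            have hlt' := Fin.lt_def.mp hlt
            have hstep : (kv : ℕ) = (kw : ℕ) + 1 := by
              by_contra hne2
              have hgt : (kw : ℕ) + 1 < (kv : ℕ) := by omega
              obtain ⟨mid, hmid⟩ : ∃ t : Fin n, (t : ℕ) = (kw : ℕ) + 1 :=
                ⟨⟨(kw : ℕ) + 1, by have := kv.isLt; omega⟩, rfl⟩
              have l1 : g (iv, kw) < g (iv, mid) := hrowM iv (Fin.lt_def.mpr (by omega))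
              have l2 : g (iv, mid) < g (iv, kv) := hrowM iv (Fin.lt_def.mpr (by omega))
              rw [hgw'] at l1
              rw [hgv] at l2
              have l1' : m - 1 < (g (iv, mid) : ℕ) := Fin.lt_def.mp l1
              have l2' : (g (iv, mid) : ℕ) < m := Fin.lt_def.mp l2
              omega
            -- there is a cell in column kw with value > m
            have hcIH : ∀ i : Fin n, (g (i, kw) : ℕ) < m → (g (i, kw) : ℕ) / n = m / n := by
              intro i hx
              have h1 := IH (g (i, kw) : ℕ) hx (Fin.is_lt _)
              have h2 : (⟨(g (i, kw) : ℕ), Fin.is_lt _⟩ : Fin (n ^ 2)) = g (i, kw) :=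
                Fin.ext rfl
              rw [h2, hsg] at h1
              have h3 : (kw : ℕ) = (g (i, kw) : ℕ) / n := h1
              rw [hIHw, hpred] at h3
              exact h3.symm
            have hex : ∃ i : Fin n, m < (g (i, kw) : ℕ) := by
              by_contra hall
              push_neg at hall
              have hcell : ∀ i : Fin n, (g (i, kw) : ℕ) < m := by
                intro i
                rcases lt_or_eq_of_le (hall i) with h | h
                · exact h
                · exfalso
                  have h1 : g (i, kw) = ⟨m, hm⟩ := Fin.ext h
                  have h2 : (i, kw) = (iv, kv) := by rw [← hv, ← h1, hsg]
                  have h3 : kw = kv := congrArg Prod.snd h2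
                  rw [← h3] at hstep
                  omega
              have hmB := Nat.div_add_mod' m n
              have hmodpos : 0 < m % n := Nat.pos_of_ne_zero hmod
              have φinj : Function.Injective
                  (fun i : Fin n => (⟨(g (i, kw) : ℕ) - m / n * n, by
                    have h1 := (div_facts' _ n (m / n) hn0 (hcIH i (hcell i))).1
                    have h2 := hcell i
                    omega⟩ : Fin (m % n))) := by
                intro a b hab
                have h5 := Fin.ext_iff.mp hab
                simp only at h5
                have ha := (div_facts' _ n (m / n) hn0 (hcIH a (hcell a))).1
                have hb := (div_facts' _ n (m / n) hn0 (hcIH b (hcell b))).1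
                have h6 : (g (a, kw) : ℕ) = (g (b, kw) : ℕ) := by omega
                have h7 : g (a, kw) = g (b, kw) := Fin.ext h6
                have h8 := hbij.1 h7
                exact congrArg Prod.fst h8
              have hcard := Fintype.card_le_of_injective _ φinj
              simp only [Fintype.card_fin] at hcard
              have := Nat.mod_lt m hn0
              omega
            obtain ⟨iex, hiex⟩ := hex
            obtain ⟨i0, hi0mem, hi0min⟩ := Finset.exists_min_image
              (Finset.univ.filter fun i : Fin n => m < (g (i, kw) : ℕ))
              (fun i => (g (i, kw) : ℕ)) ⟨iex, by simp [hiex]⟩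
            simp only [Finset.mem_filter, Finset.mem_univ, true_and] at hi0mem hi0min
            have hsu : e.symm (g (i0, kw)) = (i0, kw) := hsg _
            have hu2 : m + 1 < (g (i0, kw) : ℕ) := by
              by_contra hle
              push_neg at hle
              have huval : (g (i0, kw) : ℕ) = m + 1 := by omega
              rcases key' ⟨m, hm⟩ (g (i0, kw)) (by rw [huval]) with hr2 | hc2
              · rw [hsu, hv] at hr2
                have hr2' : iv = i0 := hr2
                have h1 : g (iv, kw) = g (i0, kw) := by rw [hr2']
                rw [hgw'] at h1
                have h2 := Fin.ext_iff.mp h1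
                have h3 : m - 1 = (g (i0, kw) : ℕ) := h2
                omega
              · rw [hsu, hv] at hc2
                have hc2' : kv = kw := hc2
                rw [← hc2'] at hIHw
                rw [hpred] at hIHw
                omega
            have hzlt : (g (i0, kw) : ℕ) - 1 < n ^ 2 := by
              have := Fin.is_lt (g (i0, kw)); omega
            obtain ⟨iz, kz, hz⟩ : ∃ a b,
                e.symm (⟨(g (i0, kw) : ℕ) - 1, hzlt⟩ : Fin (n ^ 2)) = (a, b) := ⟨_, _, rfl⟩
            have hgz : g (iz, kz) = ⟨(g (i0, kw) : ℕ) - 1, hzlt⟩ := by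
              rw [← hz]; exact hgs _
            have hzcol : kz ≠ kw := by
              intro hzc
              rw [hzc] at hgz
              have h1 : g (iz, kw) = ⟨(g (i0, kw) : ℕ) - 1, hzlt⟩ := hgz
              have h2 := hi0min iz (by
                rw [h1]
                show m < (g (i0, kw) : ℕ) - 1
                omega)
              rw [h1] at h2
              have h3 : (g (i0, kw) : ℕ) ≤ (g (i0, kw) : ℕ) - 1 := h2
              omega
            rcases key' ⟨(g (i0, kw) : ℕ) - 1, hzlt⟩ (g (i0, kw))
                (by show (g (i0, kw) : ℕ) = (g (i0, kw) : ℕ) - 1 + 1; omega) with hr3 | hc3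
            · rw [hz] at hr3
              rw [hsu] at hr3
              have hr3' : iz = i0 := hr3
              rw [hr3'] at hgz
              have hgz' : g (i0, kz) = ⟨(g (i0, kw) : ℕ) - 1, hzlt⟩ := hgz
              have hzw : kz < kw := by
                apply (hrowM i0).lt_iff_lt.mp
                show g (i0, kz) < g (i0, kw)
                rw [hgz']
                rw [Fin.lt_def]
                show (g (i0, kw) : ℕ) - 1 < (g (i0, kw) : ℕ)
                omega
              have hzw' := Fin.lt_def.mp hzw
              have hz1 : (kz : ℕ) = (kw : ℕ) - 1 := by
                by_contra hne2
                have hgt2 : (kz : ℕ) + 1 < (kw : ℕ) := by omega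
                obtain ⟨mid, hmid⟩ : ∃ t : Fin n, (t : ℕ) = (kz : ℕ) + 1 :=
                  ⟨⟨(kz : ℕ) + 1, by have := kw.isLt; omega⟩, rfl⟩
                have l1 : g (i0, kz) < g (i0, mid) := hrowM i0 (Fin.lt_def.mpr (by omega))
                have l2 : g (i0, mid) < g (i0, kw) := hrowM i0 (Fin.lt_def.mpr (by omega))
                rw [hgz'] at l1
                have l1' : (g (i0, kw) : ℕ) - 1 < (g (i0, mid) : ℕ) := Fin.lt_def.mp l1
                have l2' : (g (i0, mid) : ℕ) < (g (i0, kw) : ℕ) := Fin.lt_def.mp l2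
                omega
              have hwcol : (kw : ℕ) = m / n := by rw [hIHw, hpred]
              have hK1 : 1 ≤ m / n := by omega
              refine fullblock hK1 (i0, kz) ?_ ?_
              · rw [hgz']
                show m ≤ (g (i0, kw) : ℕ) - 1
                omega
              · show (kz : ℕ) = m / n - 1
                omega
            · rw [hz] at hc3
              rw [hsu] at hc3
              exact hzcol hc3
          · -- same column: inherits the column
            have hce' : kw = kv := hce
            rw [← hce', hIHw, hpred]
    -- Now the final contradiction using the two adjacent equal columns
    have cellcol : ∀ p : Fin n × Fin n, ((g p : ℕ)) / n = (p.2 : ℕ) := by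
      intro p
      have h1 := Col (g p : ℕ) (g p).isLt
      have h2 : (⟨(g p : ℕ), (g p).isLt⟩ : Fin (n ^ 2)) = g p := Fin.ext rfl
      rw [h2, hsg] at h1
      exact h1.symm
    set j2 : Fin n := ⟨j.val + 1, hj⟩ with hj2
    have hexp : (j.val + 1) * n = j.val * n + n := by ring
    have hMJlt : j.val * n + (n - 1) < n ^ 2 := by
      rw [← hnn]
      have hjn : (j.val + 1) * n ≤ n * n := Nat.mul_le_mul_right n (by omega)
      omega
    have hmJlt : (j.val + 1) * n < n ^ 2 := by
      rw [← hnn]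
      have h1 : (j.val + 1) * n ≤ (n - 1) * n := Nat.mul_le_mul_right n (by omega)
      have h2 : (n - 1) * n + n = n * n := by
        have h' : n - 1 + 1 = n := by omega
        calc (n - 1) * n + n = (n - 1 + 1) * n := by ring
          _ = n * n := by rw [h']
      omega
    have hseq : ((⟨(j.val + 1) * n, hmJlt⟩ : Fin (n ^ 2)) : ℕ) =
        ((⟨j.val * n + (n - 1), hMJlt⟩ : Fin (n ^ 2)) : ℕ) + 1 := by
      show (j.val + 1) * n = j.val * n + (n - 1) + 1
      omega
    obtain ⟨rM, cM, hM⟩ : ∃ a b,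
        e.symm (⟨j.val * n + (n - 1), hMJlt⟩ : Fin (n ^ 2)) = (a, b) := ⟨_, _, rfl⟩
    obtain ⟨rm2, cm2, hm2⟩ : ∃ a b,
        e.symm (⟨(j.val + 1) * n, hmJlt⟩ : Fin (n ^ 2)) = (a, b) := ⟨_, _, rfl⟩
    have hcolMJ : cM = j := by
      have h1 := Col _ hMJlt
      rw [hM] at h1
      have h2 : (cM : ℕ) = (j.val * n + (n - 1)) / n := h1
      rw [div_eq_of'' _ _ j.val (Nat.le_add_right _ _) (by omega)] at h2
      exact Fin.ext h2
    have hcolmJ : cm2 = j2 := by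
      have h1 := Col _ hmJlt
      rw [hm2] at h1
      have h2 : (cm2 : ℕ) = ((j.val + 1) * n) / n := h1
      rw [div_eq_of'' _ _ (j.val + 1) (by omega) (by omega)] at h2
      exact Fin.ext h2
    have hbndJ : ∀ i : Fin n, ((g (i, j)) : ℕ) ≤ j.val * n + (n - 1) := by
      intro i
      have h1 : ((g (i, j)) : ℕ) / n = j.val := cellcol (i, j)
      have h2 := (div_facts' _ n j.val hn0 h1).2
      omega
    have hbndJ2 : ∀ i : Fin n, (j.val + 1) * n ≤ ((g (i, j2)) : ℕ) := by
      intro i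
      have h1 : ((g (i, j2)) : ℕ) / n = j.val + 1 := cellcol (i, j2)
      have h2 := (div_facts' _ n (j.val + 1) hn0 h1).1
      omega
    have hgMJ : g (rM, j) = ⟨j.val * n + (n - 1), hMJlt⟩ := by
      have h1 := hgs (⟨j.val * n + (n - 1), hMJlt⟩ : Fin (n ^ 2))
      rw [hM] at h1
      rw [hcolMJ] at h1
      exact h1
    have hgmJ : g (rm2, j2) = ⟨(j.val + 1) * n, hmJlt⟩ := by
      have h1 := hgs (⟨(j.val + 1) * n, hmJlt⟩ : Fin (n ^ 2))
      rw [hm2] at h1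
      rw [hcolmJ] at h1
      exact h1
    have hKf := key' ⟨j.val * n + (n - 1), hMJlt⟩ ⟨(j.val + 1) * n, hmJlt⟩ hseq
    rw [hM, hm2] at hKf
    rcases hKf with hre | hce
    · have hre' : rM = rm2 := hre
      cases hcj : c j with
      | true =>
        have hcj2 : c j2 = true := by rw [hcj] at hsame; exact hsame.symm
        have hrMJ : (rM : ℕ) = n - 1 := by
          by_contra hne
          obtain ⟨lastr, hlastr⟩ : ∃ t : Fin n, (t : ℕ) = n - 1 := ⟨⟨n - 1, by omega⟩, rfl⟩
          have hlt2 : rM < lastr := Fin.lt_def.mpr (by have := rM.isLt; omega)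
          have h1 : g (rM, j) < g (lastr, j) := hcolT j hcj hlt2
          rw [hgMJ] at h1
          have h3 := hbndJ lastr
          have h4 : j.val * n + (n - 1) < ((g (lastr, j)) : ℕ) := Fin.lt_def.mp h1
          omega
        have hrmJ : (rm2 : ℕ) = 0 := by
          by_contra hne
          have hlt2 : (⟨0, hn0⟩ : Fin n) < rm2 :=
            Fin.lt_def.mpr (by show (0 : ℕ) < (rm2 : ℕ); omega)
          have h1 : g (⟨0, hn0⟩, j2) < g (rm2, j2) := hcolT j2 hcj2 hlt2
          rw [hgmJ] at h1
          have h3 := hbndJ2 ⟨0, hn0⟩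
          have h4 : ((g (⟨0, hn0⟩, j2)) : ℕ) < (j.val + 1) * n := Fin.lt_def.mp h1
          omega
        have := Fin.ext_iff.mp hre'
        omega
      | false =>
        have hcj2 : c j2 = false := by rw [hcj] at hsame; exact hsame.symm
        have hrMJ : (rM : ℕ) = 0 := by
          by_contra hne
          have hlt2 : (⟨0, hn0⟩ : Fin n) < rM :=
            Fin.lt_def.mpr (by show (0 : ℕ) < (rM : ℕ); omega)
          have h1 : g (rM, j) < g (⟨0, hn0⟩, j) := hcolF j hcj hlt2
          rw [hgMJ] at h1
          have h3 := hbndJ ⟨0, hn0⟩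
          have h4 : j.val * n + (n - 1) < ((g (⟨0, hn0⟩, j)) : ℕ) := Fin.lt_def.mp h1
          omega
        have hrmJ : (rm2 : ℕ) = n - 1 := by
          by_contra hne
          obtain ⟨lastr, hlastr⟩ : ∃ t : Fin n, (t : ℕ) = n - 1 := ⟨⟨n - 1, by omega⟩, rfl⟩
          have hlt2 : rm2 < lastr := Fin.lt_def.mpr (by have := rm2.isLt; omega)
          have h1 : g (lastr, j2) < g (rm2, j2) := hcolF j2 hcj2 hlt2
          rw [hgmJ] at h1
          have h3 := hbndJ2 lastr
          have h4 : ((g (lastr, j2)) : ℕ) < (j.val + 1) * n := Fin.lt_def.mp h1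
          omega
        have := Fin.ext_iff.mp hre'
        omega
    · have hce' : cM = cm2 := hce
      rw [hcolMJ, hcolmJ] at hce'
      have := Fin.ext_iff.mp hce'
      have h2 : (j : ℕ) = j.val + 1 := this
      omega
end
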